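/- arXiv:1512.05033 — 9 statements merged into one kernel-verified Lean document; each statement's English description precedes it below -/
import Mathlib

section
/- Suppose ∑_{j≥2} (j−1) b_j ≤ c·b_0 (in particular this series converges). Then B_c(s) > 0 for all s ∈ [0,1); consequently s = 1 is the only root of the equation B_c(s) = 0 in [0,1]. -/
open Set Filter Topology

/-- The generating function `B_i(s) = ∑_{j≥0} b_j s^j + (i-1) b_0 (1-s)`. -/
noncomputable def Bi (b : ℕ → ℝ) (i : ℕ) (s : ℝ) : ℝ :=
  (∑' j : ℕ, b j * s ^ j) + ((i : ℝ) - 1) * b 0 * (1 - s)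

lemma summable_pow_mul (b : ℕ → ℝ) (hbsum : Summable b) {s : ℝ}
    (h0 : 0 ≤ s) (h1 : s ≤ 1) : Summable (fun j : ℕ => b j * s ^ j) := by
  rw [← summable_abs_iff]
  apply Summable.of_nonneg_of_le (fun j => abs_nonneg _) (fun j => ?_)
    (summable_abs_iff.mpr hbsum)
  rw [abs_mul]
  calc |b j| * |s ^ j| ≤ |b j| * 1 := by
        apply mul_le_mul_of_nonneg_left _ (abs_nonneg _)
        rw [abs_pow, abs_of_nonneg h0]
        exact pow_le_one₀ h0 h1
    _ = |b j| := mul_one _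

lemma summable_g (b : ℕ → ℝ) (hbsum : Summable b) {s : ℝ}
    (h0 : 0 ≤ s) (h1 : s ≤ 1) : Summable (fun j : ℕ => b j * (s ^ j - s)) := by
  have := (summable_pow_mul b hbsum h0 h1).sub (hbsum.mul_right s)
  simpa [mul_sub] using this

lemma key (b : ℕ → ℝ) (hbsum : Summable b) (hbzero : (∑' j : ℕ, b j) = 0)
    {s : ℝ} (h0 : 0 ≤ s) (h1 : s ≤ 1) :
    (∑' j : ℕ, b j * s ^ j) = b 0 * (1 - s) + ∑' j : ℕ, b (j + 2) * (s ^ (j + 2) - s) := by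
  have hg : Summable (fun j : ℕ => b j * (s ^ j - s)) := summable_g b hbsum h0 h1
  have h1' : (∑' j : ℕ, b j * s ^ j) = ∑' j : ℕ, b j * (s ^ j - s) := by
    have h2 := Summable.tsum_sub (summable_pow_mul b hbsum h0 h1) (hbsum.mul_right s)
    rw [tsum_mul_right, hbzero, zero_mul, sub_zero] at h2
    rw [← h2]
    congr 1
    ext j
    ring
  rw [h1', Summable.tsum_eq_zero_add hg, Summable.tsum_eq_zero_add (by
    simpa using (summable_nat_add_iff 1).mpr hg)]
  simp only [pow_zero, pow_one, sub_self, mul_zero, zero_add]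

theorem stmt0 (c : ℕ) (hc : 1 ≤ c) (b : ℕ → ℝ)
    (hbnn : ∀ j : ℕ, j ≠ 1 → 0 ≤ b j) (hb0 : 0 < b 0)
    (hbsum : Summable b) (hbzero : (∑' j : ℕ, b j) = 0)
    (hb2 : 0 < ∑' j : ℕ, b (j + 2))
    (hconv : Summable (fun j : ℕ => ((j : ℝ) + 1) * b (j + 2)))
    (hle : (∑' j : ℕ, ((j : ℝ) + 1) * b (j + 2)) ≤ (c : ℝ) * b 0) :
    (∀ s ∈ Set.Ico (0 : ℝ) 1, 0 < Bi b c s) ∧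
      (∀ s ∈ Set.Icc (0 : ℝ) 1, Bi b c s = 0 → s = 1) := by
  have main : ∀ s ∈ Set.Ico (0 : ℝ) 1, 0 < Bi b c s := by
    intro s hs
    obtain ⟨h0, h1⟩ := hs
    have h1' : s ≤ 1 := le_of_lt h1
    have hkey := key b hbsum hbzero h0 h1'
    have hgsum : Summable (fun j : ℕ => b (j + 2) * (s ^ (j + 2) - s)) := by
      have := (summable_nat_add_iff 2).mpr (summable_g b hbsum h0 h1')
      simpa using this
    -- termwise bound
    have hterm : ∀ j : ℕ, -(((j : ℝ) + 1) * b (j + 2)) * (s * (1 - s))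
        ≤ b (j + 2) * (s ^ (j + 2) - s) := by
      intro j
      have hb : 0 ≤ b (j + 2) := hbnn (j + 2) (by omega)
      have hbern : 1 + ((j : ℝ) + 1) * (s - 1) ≤ s ^ (j + 1) := by
        have := one_add_mul_le_pow (a := s - 1) (by linarith) (j + 1)
        simpa using this
      have hpow : s - s ^ (j + 2) ≤ ((j : ℝ) + 1) * (s * (1 - s)) := by
        have : s - s ^ (j + 2) = s * (1 - s ^ (j + 1)) := by ring
        rw [this]
        have h2 : 1 - s ^ (j + 1) ≤ ((j : ℝ) + 1) * (1 - s) := by nlinarith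
        nlinarith [pow_nonneg h0 (j + 1)]
      nlinarith
    have hlsum : Summable (fun j : ℕ => -(((j : ℝ) + 1) * b (j + 2)) * (s * (1 - s))) := by
      have := (hconv.mul_right (s * (1 - s))).neg
      simpa [neg_mul] using this
    have hsum_le := Summable.tsum_le_tsum hterm hlsum hgsum
    have hlhs : (∑' j : ℕ, -(((j : ℝ) + 1) * b (j + 2)) * (s * (1 - s)))
        = -(∑' j : ℕ, ((j : ℝ) + 1) * b (j + 2)) * (s * (1 - s)) := by
      rw [tsum_mul_right, tsum_neg]
    rw [hlhs] at hsum_le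
    have hs1 : 0 ≤ s * (1 - s) := mul_nonneg h0 (by linarith)
    have hcb : (1 : ℝ) ≤ (c : ℝ) := by exact_mod_cast hc
    have hA : -((c : ℝ) * b 0) * (s * (1 - s))
        ≤ -(∑' j : ℕ, ((j : ℝ) + 1) * b (j + 2)) * (s * (1 - s)) := by
      nlinarith
    have hBi : Bi b c s = (c : ℝ) * b 0 * (1 - s)
        + ∑' j : ℕ, b (j + 2) * (s ^ (j + 2) - s) := by
      rw [Bi, hkey]; ring
    rw [hBi]
    have hpos : 0 < (c : ℝ) * b 0 * ((1 - s) * (1 - s)) :=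
      mul_pos (mul_pos (lt_of_lt_of_le zero_lt_one hcb) hb0)
        (mul_pos (by linarith) (by linarith))
    nlinarith [hpos, hsum_le, hA]
  refine ⟨main, fun s hs hzero => ?_⟩
  by_contra hne
  have hlt : s < 1 := lt_of_le_of_ne hs.2 hne
  exact absurd hzero (ne_of_gt (main s ⟨hs.1, hlt⟩))
end

section
/- Suppose ∑_{j≥2} (j−1) b_j > c·b_0, where the sum is taken in [0,+∞] (so the case of a divergent series is included). Then there exists u ∈ (0,1) such that B_c(u) = 0, B_c(s) > 0 for all 0 ≤ s < u, and B_c(s) < 0 for all u < s < 1; in particular u and 1 are the only roots of B_c(s) = 0 in [0,1]. -/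
open Set Filter Topology
open scoped ENNReal

/-- `H b s = ∑' j, b (j+2) * (s + s² + ⋯ + s^{j+1})`. -/
noncomputable def Hfun (b : ℕ → ℝ) (s : ℝ) : ℝ :=
  ∑' j : ℕ, b (j + 2) * ∑ k ∈ Finset.range (j + 1), s ^ (k + 1)

private lemma gs_nonneg {s : ℝ} (hs : 0 ≤ s) (j : ℕ) :
    0 ≤ ∑ k ∈ Finset.range (j + 1), s ^ (k + 1) :=
  Finset.sum_nonneg fun k _ => pow_nonneg hs _

private lemma gs_le {s : ℝ} (hs0 : 0 ≤ s) (hs1 : s < 1) (n : ℕ) :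
    ∑ k ∈ Finset.range n, s ^ k ≤ (1 - s)⁻¹ := by
  have := Summable.sum_le_tsum (Finset.range n) (fun k _ => pow_nonneg hs0 k)
    (summable_geometric_of_lt_one hs0 hs1)
  rwa [tsum_geometric_of_lt_one hs0 hs1] at this

private lemma gs1_le {s : ℝ} (hs0 : 0 ≤ s) (hs1 : s < 1) (j : ℕ) :
    ∑ k ∈ Finset.range (j + 1), s ^ (k + 1) ≤ (1 - s)⁻¹ := by
  have h1 : ∑ k ∈ Finset.range (j + 1), s ^ (k + 1)
      ≤ ∑ k ∈ Finset.range (j + 2), s ^ k := by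
    rw [Finset.sum_range_succ' (fun k => s ^ k) (j + 1)]
    simp [pow_zero]
  exact h1.trans (gs_le hs0 hs1 _)

private lemma summable_b2 {b : ℕ → ℝ} (hbsum : Summable b) :
    Summable (fun j => b (j + 2)) := (summable_nat_add_iff 2).2 hbsum

private lemma summable_H {b : ℕ → ℝ} (hbnn : ∀ j : ℕ, j ≠ 1 → 0 ≤ b j)
    (hbsum : Summable b) {s : ℝ} (hs0 : 0 ≤ s) (hs1 : s < 1) :
    Summable (fun j : ℕ => b (j + 2) * ∑ k ∈ Finset.range (j + 1), s ^ (k + 1)) := by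
  refine Summable.of_nonneg_of_le
    (fun j => mul_nonneg (hbnn _ (by omega)) (gs_nonneg hs0 j))
    (fun j => mul_le_mul_of_nonneg_left (gs1_le hs0 hs1 j) (hbnn _ (by omega)))
    ((summable_b2 hbsum).mul_right _)

private lemma summable_abs_b {b : ℕ → ℝ} (hbnn : ∀ j : ℕ, j ≠ 1 → 0 ≤ b j)
    (hbsum : Summable b) : Summable (fun j => |b j|) := by
  have h2 : Summable (fun j : ℕ => if j = 1 then |b 1| - b 1 else 0) :=
    summable_of_ne_finset_zero (s := {1}) (by intro j hj; simp at hj; simp [hj])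
  refine (hbsum.add h2).congr fun j => ?_
  by_cases hj : j = 1
  · subst hj; simp
  · simp [hj, abs_of_nonneg (hbnn j hj)]

private lemma summable_bg {b : ℕ → ℝ} (hbnn : ∀ j : ℕ, j ≠ 1 → 0 ≤ b j)
    (hbsum : Summable b) {s : ℝ} (hs0 : 0 ≤ s) (hs1 : s < 1) :
    Summable (fun j : ℕ => b j * ∑ k ∈ Finset.range j, s ^ k) := by
  rw [← summable_abs_iff]
  refine Summable.of_nonneg_of_le (fun j => abs_nonneg _) (fun j => ?_)
    ((summable_abs_b hbnn hbsum).mul_right ((1 - s)⁻¹))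
  rw [abs_mul]
  refine mul_le_mul_of_nonneg_left ?_ (abs_nonneg _)
  rw [abs_of_nonneg (Finset.sum_nonneg fun k _ => pow_nonneg hs0 k)]
  exact gs_le hs0 hs1 j

set_option maxHeartbeats 1000000 in
/-- Key identity: `Bi b c s = (1 - s) * (c * b 0 - H b s)` for `s ∈ [0,1)`. -/
private lemma Bi_eq {b : ℕ → ℝ} (c : ℕ) (hbnn : ∀ j : ℕ, j ≠ 1 → 0 ≤ b j)
    (hbsum : Summable b) (hbzero : (∑' j : ℕ, b j) = 0)
    {s : ℝ} (hs0 : 0 ≤ s) (hs1 : s < 1) :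
    Bi b c s = (1 - s) * ((c : ℝ) * b 0 - Hfun b s) := by
  have hbg := summable_bg hbnn hbsum hs0 hs1
  have hH := summable_H hbnn hbsum hs0 hs1
  have hb2 := summable_b2 hbsum
  -- step A: ∑' b j * s^j = (s-1) * ∑' b j * geomsum j
  have hA : (∑' j : ℕ, b j * s ^ j)
      = (s - 1) * ∑' j : ℕ, b j * ∑ k ∈ Finset.range j, s ^ k := by
    have he : ∀ j : ℕ, b j * s ^ j = b j + (s - 1) * (b j * ∑ k ∈ Finset.range j, s ^ k) := by
      intro j
      have h := geom_sum_mul s j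
      linear_combination (-b j) * h
    calc (∑' j : ℕ, b j * s ^ j)
        = ∑' j : ℕ, (b j + (s - 1) * (b j * ∑ k ∈ Finset.range j, s ^ k)) :=
          tsum_congr he
      _ = (∑' j : ℕ, b j) + ∑' j : ℕ, (s - 1) * (b j * ∑ k ∈ Finset.range j, s ^ k) :=
          Summable.tsum_add hbsum (hbg.mul_left _)
      _ = (s - 1) * ∑' j : ℕ, b j * ∑ k ∈ Finset.range j, s ^ k := by
          rw [hbzero, tsum_mul_left, zero_add]
  -- step B: ∑' b j * geomsum j = -b 0 + H s
  have hB : (∑' j : ℕ, b j * ∑ k ∈ Finset.range j, s ^ k) = -b 0 + Hfun b s := by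
    have h1 : (∑' j : ℕ, b j * ∑ k ∈ Finset.range j, s ^ k)
        = b 0 * (∑ k ∈ Finset.range 0, s ^ k)
          + ∑' j : ℕ, b (j + 1) * ∑ k ∈ Finset.range (j + 1), s ^ k :=
      Summable.tsum_eq_zero_add hbg
    have hbg1 : Summable (fun j : ℕ => b (j + 1) * ∑ k ∈ Finset.range (j + 1), s ^ k) :=
      (summable_nat_add_iff 1).2 hbg
    have h2 : (∑' j : ℕ, b (j + 1) * ∑ k ∈ Finset.range (j + 1), s ^ k)
        = b 1 * (∑ k ∈ Finset.range 1, s ^ k)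
          + ∑' j : ℕ, b (j + 2) * ∑ k ∈ Finset.range (j + 2), s ^ k :=
      Summable.tsum_eq_zero_add hbg1
    have h3 : ∀ j : ℕ, b (j + 2) * ∑ k ∈ Finset.range (j + 2), s ^ k
        = b (j + 2) + b (j + 2) * ∑ k ∈ Finset.range (j + 1), s ^ (k + 1) := by
      intro j
      simp only [Finset.sum_range_succ' (fun k => s ^ k) (j + 1), pow_zero]
      ring
    have h4 : (∑' j : ℕ, b (j + 2) * ∑ k ∈ Finset.range (j + 2), s ^ k)
        = (∑' j : ℕ, b (j + 2)) + Hfun b s := by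
      rw [tsum_congr h3]
      exact Summable.tsum_add hb2 hH
    have h5 : b 0 + (b 1 + ∑' j : ℕ, b (j + 2)) = 0 := by
      have e1 : (∑' j : ℕ, b j) = b 0 + ∑' j : ℕ, b (j + 1) := Summable.tsum_eq_zero_add hbsum
      have e2 : (∑' j : ℕ, b (j + 1)) = b 1 + ∑' j : ℕ, b (j + 2) :=
        Summable.tsum_eq_zero_add ((summable_nat_add_iff 1).2 hbsum)
      rw [← e2, ← e1, hbzero]
    rw [h1, h2, h4]
    simp only [Finset.range_zero, Finset.sum_empty, mul_zero, zero_add,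
      Finset.range_one, Finset.sum_singleton, pow_zero, mul_one]
    linarith
  rw [Bi, hA, hB]
  ring

private lemma Hfun_strictMono {b : ℕ → ℝ} (hbnn : ∀ j : ℕ, j ≠ 1 → 0 ≤ b j)
    (hbsum : Summable b) (hb2 : 0 < ∑' j : ℕ, b (j + 2))
    {s t : ℝ} (hs0 : 0 ≤ s) (hst : s < t) (ht1 : t < 1) :
    Hfun b s < Hfun b t := by
  have ht0 : 0 ≤ t := hs0.trans hst.le
  have hs1 : s < 1 := hst.trans ht1
  obtain ⟨j0, hj0⟩ : ∃ j, 0 < b (j + 2) := by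
    by_contra h
    push_neg at h
    have hz : ∀ j : ℕ, b (j + 2) = 0 := fun j => le_antisymm (h j) (hbnn _ (by omega))
    simp [hz] at hb2
  refine Summable.tsum_lt_tsum (i := j0) (fun j => ?_) ?_ (summable_H hbnn hbsum hs0 hs1)
    (summable_H hbnn hbsum ht0 ht1)
  · exact mul_le_mul_of_nonneg_left
      (Finset.sum_le_sum fun k _ => pow_le_pow_left₀ hs0 hst.le _) (hbnn _ (by omega))
  · refine mul_lt_mul_of_pos_left ?_ hj0
    refine Finset.sum_lt_sum (fun k _ => pow_le_pow_left₀ hs0 hst.le _) ?_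
    exact ⟨0, Finset.mem_range.2 (by omega), by
      simpa using pow_lt_pow_left₀ hst hs0 (n := 1) one_ne_zero⟩

private lemma Hfun_continuousOn {b : ℕ → ℝ} (hbnn : ∀ j : ℕ, j ≠ 1 → 0 ≤ b j)
    (hbsum : Summable b) {a : ℝ} (ha0 : 0 ≤ a) (ha1 : a < 1) :
    ContinuousOn (Hfun b) (Set.Icc 0 a) := by
  refine continuousOn_tsum (u := fun j => b (j + 2) * (1 - a)⁻¹)
    (fun j => Continuous.continuousOn
      (continuous_const.mul (continuous_finset_sum _ fun k _ => continuous_pow (k + 1))))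
    ((summable_b2 hbsum).mul_right _) (fun j x hx => ?_)
  obtain ⟨hx0, hxa⟩ := hx
  have hx1 : x < 1 := lt_of_le_of_lt hxa ha1
  rw [Real.norm_eq_abs, abs_of_nonneg (mul_nonneg (hbnn _ (by omega)) (gs_nonneg hx0 j))]
  refine mul_le_mul_of_nonneg_left ((gs1_le hx0 hx1 j).trans ?_) (hbnn _ (by omega))
  exact inv_anti₀ (by linarith) (by linarith)

private lemma Hfun_zero (b : ℕ → ℝ) : Hfun b 0 = 0 := by
  have : ∀ j : ℕ, b (j + 2) * ∑ k ∈ Finset.range (j + 1), (0 : ℝ) ^ (k + 1) = 0 := by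
    intro j; simp
  simp only [Hfun, tsum_congr this, tsum_zero]

theorem stmt1 (c : ℕ) (hc : 1 ≤ c) (b : ℕ → ℝ)
    (hbnn : ∀ j : ℕ, j ≠ 1 → 0 ≤ b j) (hb0 : 0 < b 0)
    (hbsum : Summable b) (hbzero : (∑' j : ℕ, b j) = 0)
    (hb2 : 0 < ∑' j : ℕ, b (j + 2))
    (hgt : ENNReal.ofReal ((c : ℝ) * b 0) <
      ∑' j : ℕ, ENNReal.ofReal (((j : ℝ) + 1) * b (j + 2))) :
    ∃ u ∈ Set.Ioo (0 : ℝ) 1, Bi b c u = 0 ∧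
      (∀ s : ℝ, 0 ≤ s → s < u → 0 < Bi b c s) ∧
      (∀ s : ℝ, u < s → s < 1 → Bi b c s < 0) ∧
      (∀ s ∈ Set.Icc (0 : ℝ) 1, Bi b c s = 0 → s = u ∨ s = 1) := by
  have hcb0 : (0 : ℝ) < (c : ℝ) * b 0 := by positivity
  -- find a finite partial sum exceeding c * b 0
  obtain ⟨F, hF⟩ : ∃ F : Finset ℕ,
      ENNReal.ofReal ((c : ℝ) * b 0) < ∑ j ∈ F, ENNReal.ofReal (((j : ℝ) + 1) * b (j + 2)) := by
    rw [ENNReal.tsum_eq_iSup_sum] at hgt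
    exact lt_iSup_iff.1 hgt
  have hFnn : ∀ j ∈ F, 0 ≤ ((j : ℝ) + 1) * b (j + 2) :=
    fun j _ => mul_nonneg (by positivity) (hbnn _ (by omega))
  rw [← ENNReal.ofReal_sum_of_nonneg hFnn] at hF
  have hFr : (c : ℝ) * b 0 < ∑ j ∈ F, ((j : ℝ) + 1) * b (j + 2) := by
    by_contra h
    push_neg at h
    exact absurd (ENNReal.ofReal_le_ofReal h) (not_le.2 hF)
  -- the polynomial P
  set P : ℝ → ℝ := fun x => ∑ j ∈ F, b (j + 2) * ∑ k ∈ Finset.range (j + 1), x ^ (k + 1)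
    with hP
  have hP1 : P 1 = ∑ j ∈ F, ((j : ℝ) + 1) * b (j + 2) := by
    refine Finset.sum_congr rfl fun j _ => ?_
    simp [mul_comm]
  have hPcont : Continuous P :=
    continuous_finset_sum _ fun j _ =>
      continuous_const.mul (continuous_finset_sum _ fun k _ => continuous_pow (k + 1))
  -- find a ∈ (0,1) with P a > c * b 0
  obtain ⟨a, haP, ha01⟩ : ∃ a : ℝ, (c : ℝ) * b 0 < P a ∧ a ∈ Set.Ioo (0 : ℝ) 1 := by
    have h1 : Tendsto P (𝓝[<] 1) (𝓝 (P 1)) :=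
      (hPcont.tendsto 1).mono_left nhdsWithin_le_nhds
    have h2 : ∀ᶠ x in 𝓝[<] (1 : ℝ), (c : ℝ) * b 0 < P x :=
      h1.eventually (eventually_gt_nhds (by rw [hP1]; exact hFr))
    have h3 : ∀ᶠ x in 𝓝[<] (1 : ℝ), x ∈ Set.Ioo (0 : ℝ) 1 := by
      have : Set.Ioo (0 : ℝ) 1 ∈ 𝓝[<] (1 : ℝ) := Ioo_mem_nhdsLT_of_mem (by norm_num)
      exact this
    exact (h2.and h3).exists
  obtain ⟨ha0, ha1⟩ := ha01
  -- H a > c * b 0, so G a < 0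
  have hHa : (c : ℝ) * b 0 < Hfun b a := by
    refine lt_of_lt_of_le haP ?_
    exact Summable.sum_le_tsum F (fun j _ => mul_nonneg (hbnn _ (by omega)) (gs_nonneg ha0.le j))
      (summable_H hbnn hbsum ha0.le ha1)
  -- define G
  set G : ℝ → ℝ := fun s => (c : ℝ) * b 0 - Hfun b s with hG
  have hGcont : ContinuousOn G (Set.Icc 0 a) :=
    continuousOn_const.sub (Hfun_continuousOn hbnn hbsum ha0.le ha1)
  have hGa : G a < 0 := by simp only [hG]; linarith
  have hG0 : 0 < G 0 := by simp only [hG, Hfun_zero]; linarith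
  -- IVT
  obtain ⟨u, hu, hGu⟩ : ∃ u ∈ Set.Ioo (0 : ℝ) a, G u = 0 :=
    intermediate_value_Ioo' ha0.le hGcont ⟨hGa, hG0⟩
  have hu01 : u ∈ Set.Ioo (0 : ℝ) 1 := ⟨hu.1, hu.2.trans ha1⟩
  -- strict antitonicity of G on [0,1)
  have hGanti : ∀ s t : ℝ, 0 ≤ s → s < t → t < 1 → G t < G s := by
    intro s t hs0 hst ht1
    have := Hfun_strictMono hbnn hbsum hb2 hs0 hst ht1
    simp only [hG]; linarith
  have hBiG : ∀ s : ℝ, 0 ≤ s → s < 1 → Bi b c s = (1 - s) * G s := fun s hs0 hs1 =>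
    Bi_eq c hbnn hbsum hbzero hs0 hs1
  refine ⟨u, hu01, ?_, ?_, ?_, ?_⟩
  · rw [hBiG u hu01.1.le hu01.2, hGu, mul_zero]
  · intro s hs0 hsu
    have hs1 : s < 1 := hsu.trans hu01.2
    rw [hBiG s hs0 hs1]
    have : G u < G s := hGanti s u hs0 hsu hu01.2
    have h1s : 0 < 1 - s := by linarith
    nlinarith [hGu]
  · intro s hus hs1
    rw [hBiG s (hu01.1.le.trans hus.le) hs1]
    have : G s < G u := hGanti u s hu01.1.le hus hs1
    have h1s : 0 < 1 - s := by linarith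
    nlinarith [hGu]
  · intro s hs hBis
    rcases eq_or_lt_of_le hs.2 with h1 | h1
    · exact Or.inr h1
    · left
      rw [hBiG s hs.1 h1] at hBis
      have hGs : G s = 0 := by
        rcases mul_eq_zero.1 hBis with h | h
        · exfalso; linarith
        · exact h
      rcases lt_trichotomy s u with h | h | h
      · exfalso
        have := hGanti s u hs.1 h hu01.2
        rw [hGu] at this; linarith
      · exact h
      · exfalso
        have := hGanti u s hu01.1.le h h1
        rw [hGu] at this; linarith
end

section
/- For every λ > 0 the equation B_c(s) = λ·s has exactly one root s in the interval [0,1], and this root satisfies 0 < s < 1. -/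
/-!
Put `f s = B_c(s) - λ s`. Apart from an affine part, `B` is a power series whose coefficients
`b_j`, `j ≥ 2`, are nonnegative, so `f` is convex on `[0, 1]`. Since `f 0 = c b_0 > 0` and
`f 1 = -λ < 0`, the intermediate value theorem gives a root in `(0, 1)`, and convexity forbids a
second one: if `f u = f v = 0` with `u < v < 1`, then `f v` lies below the chord from `(u, 0)` to
`(1, -λ)`, hence `f v < 0`.
-/

open Set Filter Topology

theorem ConvexOn.eq_of_zero_of_zero_of_neg {f : ℝ → ℝ} {a b : ℝ} (hf : ConvexOn ℝ (Icc a b) f)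
    (hb : f b < 0) {u v : ℝ} (hu : u ∈ Icc a b) (hv : v ∈ Icc a b) (hfu : f u = 0)
    (hfv : f v = 0) : u = v := by
  wlog huv : u < v generalizing u v
  · rcases (not_lt.1 huv).eq_or_lt with h | h
    · exact h.symm
    · exact (this hv hu hfv hfu h).symm
  have hvb : v < b := hv.2.lt_of_ne (by rintro rfl; linarith)
  have hvseg : v ∈ openSegment ℝ u b := by
    rw [openSegment_eq_Ioo (huv.trans hvb)]
    exact ⟨huv, hvb⟩
  have := hf.lt_left_of_right_lt hu (right_mem_Icc.2 (hu.1.trans hu.2)) hvseg (by linarith)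
  linarith

theorem ConvexOn.existsUnique_zero_of_pos_of_neg {f : ℝ → ℝ} {a b : ℝ} (hab : a ≤ b)
    (hf : ConvexOn ℝ (Icc a b) f) (hcont : ContinuousOn f (Icc a b)) (ha : 0 < f a)
    (hb : f b < 0) : ∃ s ∈ Ioo a b, f s = 0 ∧ ∀ t ∈ Icc a b, f t = 0 → t = s := by
  obtain ⟨s, hs, hfs⟩ := intermediate_value_Icc' hab hcont ⟨hb.le, ha.le⟩
  refine ⟨s, ⟨hs.1.lt_of_ne ?_, hs.2.lt_of_ne ?_⟩, hfs, fun t ht hft ↦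
    hf.eq_of_zero_of_zero_of_neg hb ht hs hft hfs⟩ <;> rintro rfl <;> linarith

theorem ConvexOn.tsum {ι E : Type*} [AddCommGroup E] [Module ℝ E] {s : Set E}
    {f : ι → E → ℝ} (hs : Convex ℝ s) (hf : ∀ i, ConvexOn ℝ s (f i))
    (hsum : ∀ x ∈ s, Summable fun i ↦ f i x) : ConvexOn ℝ s fun x ↦ ∑' i, f i x := by
  refine ⟨hs, fun x hx y hy a b ha hb hab ↦ ?_⟩
  calc ∑' i, f i (a • x + b • y)
      ≤ ∑' i, (a • f i x + b • f i y) :=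
        Summable.tsum_le_tsum (fun i ↦ (hf i).2 hx hy ha hb hab) (hsum _ (hs hx hy ha hb hab))
          (((hsum x hx).const_smul a).add ((hsum y hy).const_smul b))
    _ = a • ∑' i, f i x + b • ∑' i, f i y := by
        rw [Summable.tsum_add ((hsum x hx).const_smul a) ((hsum y hy).const_smul b),
          Summable.tsum_const_smul _ (hsum x hx), Summable.tsum_const_smul _ (hsum y hy)]

theorem convexOn_mul_pow {a : ℝ} {j : ℕ} (h : j ≤ 1 ∨ 0 ≤ a) :
    ConvexOn ℝ (Ici 0) fun s : ℝ ↦ a * s ^ j := by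
  rcases h with hj | ha
  · interval_cases j
    · simpa using convexOn_const a (convex_Ici 0)
    · simp only [pow_one]
      exact (LinearMap.mul ℝ ℝ a).convexOn (convex_Ici 0)
  · exact (convexOn_pow j).smul ha

theorem summable_mul_pow_of_abs_le_one {b : ℕ → ℝ} (hb : Summable b) {s : ℝ} (hs : |s| ≤ 1) :
    Summable fun j ↦ b j * s ^ j := by
  refine hb.abs.of_norm_bounded fun j ↦ ?_
  rw [norm_mul, norm_pow, Real.norm_eq_abs, Real.norm_eq_abs]
  exact mul_le_of_le_one_right (abs_nonneg _) (pow_le_one₀ (abs_nonneg s) hs)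

theorem continuousOn_tsum_mul_pow {b : ℕ → ℝ} (hb : Summable b) :
    ContinuousOn (fun s : ℝ ↦ ∑' j, b j * s ^ j) (Icc (-1) 1) := by
  refine continuousOn_tsum (fun j ↦ by fun_prop) hb.abs fun j s hs ↦ ?_
  rw [norm_mul, norm_pow, Real.norm_eq_abs, Real.norm_eq_abs]
  exact mul_le_of_le_one_right (abs_nonneg _) (pow_le_one₀ (abs_nonneg s) (abs_le.2 hs))

theorem convexOn_tsum_mul_pow {b : ℕ → ℝ} (hb : Summable b) (hbnn : ∀ j, 2 ≤ j → 0 ≤ b j) :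
    ConvexOn ℝ (Icc 0 1) fun s : ℝ ↦ ∑' j, b j * s ^ j :=
  ConvexOn.tsum (convex_Icc 0 1)
    (fun j ↦ (convexOn_mul_pow ((le_or_gt j 1).imp_right (hbnn j))).subset Icc_subset_Ici_self
      (convex_Icc 0 1))
    fun _ hs ↦ summable_mul_pow_of_abs_le_one hb (abs_le.2 ⟨by linarith [hs.1], hs.2⟩)

theorem Bi_zero (b : ℕ → ℝ) (i : ℕ) : Bi b i 0 = i * b 0 := by
  rw [Bi, tsum_eq_single 0 fun j hj ↦ by simp [zero_pow hj]]
  ring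

theorem Bi_one (b : ℕ → ℝ) (i : ℕ) : Bi b i 1 = ∑' j, b j := by
  simp [Bi]

theorem convexOn_Bi_sub_mul {b : ℕ → ℝ} (hb : Summable b) (hbnn : ∀ j, 2 ≤ j → 0 ≤ b j)
    (i : ℕ) (lam : ℝ) : ConvexOn ℝ (Icc 0 1) fun s ↦ Bi b i s - lam * s := by
  have haff : ConvexOn ℝ (Icc 0 1) fun s : ℝ ↦ (i - 1) * b 0 + (-((i - 1) * b 0) - lam) * s :=
    (convexOn_const _ (convex_Icc 0 1)).add ((LinearMap.mul ℝ ℝ _).convexOn (convex_Icc 0 1))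
  have hsplit : (fun s ↦ Bi b i s - lam * s) =
      fun s ↦ (∑' j, b j * s ^ j) + ((i - 1) * b 0 + (-((i - 1) * b 0) - lam) * s) := by
    ext s
    rw [Bi]
    ring
  rw [hsplit]
  exact (convexOn_tsum_mul_pow hb hbnn).add haff

theorem continuousOn_Bi_sub_mul {b : ℕ → ℝ} (hb : Summable b) (i : ℕ) (lam : ℝ) :
    ContinuousOn (fun s ↦ Bi b i s - lam * s) (Icc 0 1) := by
  have := (continuousOn_tsum_mul_pow hb).mono (Icc_subset_Icc_left (by norm_num : (-1 : ℝ) ≤ 0))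
  unfold Bi
  fun_prop

theorem stmt2_general (c : ℕ) (hc : 1 ≤ c) (b : ℕ → ℝ)
    (hbnn : ∀ j : ℕ, j ≠ 1 → 0 ≤ b j) (hb0 : 0 < b 0)
    (hbsum : Summable b) (hbzero : (∑' j : ℕ, b j) = 0) :
    ∀ lam : ℝ, 0 < lam →
      ∃ s ∈ Set.Ioo (0 : ℝ) 1, Bi b c s = lam * s ∧
        ∀ t ∈ Set.Icc (0 : ℝ) 1, Bi b c t = lam * t → t = s := by
  intro lam hlam
  have hbnn' : ∀ j, 2 ≤ j → 0 ≤ b j := fun j hj ↦ hbnn j (by omega)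
  have hc' : (0 : ℝ) < c := by exact_mod_cast hc
  have hpos : 0 < Bi b c 0 - lam * 0 := by rw [Bi_zero]; simpa using mul_pos hc' hb0
  have hneg : Bi b c 1 - lam * 1 < 0 := by rw [Bi_one, hbzero]; linarith
  obtain ⟨s, hs, hroot, huniq⟩ :=
    (convexOn_Bi_sub_mul hbsum hbnn' c lam).existsUnique_zero_of_pos_of_neg zero_le_one
      (continuousOn_Bi_sub_mul hbsum c lam) hpos hneg
  exact ⟨s, hs, sub_eq_zero.1 hroot, fun t ht h ↦ huniq t ht (sub_eq_zero.2 h)⟩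

theorem stmt2 (c : ℕ) (hc : 1 ≤ c) (b : ℕ → ℝ)
    (hbnn : ∀ j : ℕ, j ≠ 1 → 0 ≤ b j) (hb0 : 0 < b 0)
    (hbsum : Summable b) (hbzero : (∑' j : ℕ, b j) = 0)
    (hb2 : 0 < ∑' j : ℕ, b (j + 2)) :
    ∀ lam : ℝ, 0 < lam →
      ∃ s ∈ Set.Ioo (0 : ℝ) 1, Bi b c s = lam * s ∧
        ∀ t ∈ Set.Icc (0 : ℝ) 1, Bi b c t = lam * t → t = s :=
  stmt2_general c hc b hbnn hb0 hbsum hbzero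
end

section
/- The function u : (0,∞) → ℝ assigning to each λ > 0 the unique root u(λ) ∈ [0,1] of the equation B_c(s) = λ·s is infinitely differentiable (C^∞) on (0,∞). -/
open Set Filter Topology
open scoped NNReal ENNReal

section Aux

variable {b : ℕ → ℝ}

lemma aux_summable (hbsum : Summable b) {x : ℝ} (hx : |x| ≤ 1) :
    Summable fun j => b j * x ^ j := by
  refine Summable.of_norm_bounded hbsum.abs fun j => ?_
  rw [Real.norm_eq_abs, abs_mul, abs_pow]
  calc |b j| * |x| ^ j ≤ |b j| * 1 :=
        mul_le_mul_of_nonneg_left (pow_le_one₀ (abs_nonneg x) hx) (abs_nonneg _)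
    _ = |b j| := mul_one _

lemma aux_convex (hbnn : ∀ j : ℕ, j ≠ 1 → 0 ≤ b j) (hbsum : Summable b) :
    ConvexOn ℝ (Icc (0:ℝ) 1) fun s => ∑' j : ℕ, b j * s ^ j := by
  refine ⟨convex_Icc 0 1, fun x hx y hy t w ht hw htw => ?_⟩
  simp only [smul_eq_mul]
  have hmem : t * x + w * y ∈ Icc (0:ℝ) 1 := by
    have := (convex_Icc (0:ℝ) 1) hx hy ht hw htw
    simpa using this
  have habs : ∀ z : ℝ, z ∈ Icc (0:ℝ) 1 → |z| ≤ 1 := by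
    intro z hz
    rw [abs_le]; constructor <;> [linarith [hz.1]; exact hz.2]
  have S1 : Summable fun j => b j * (t * x + w * y) ^ j :=
    aux_summable hbsum (habs _ hmem)
  have S2 : Summable fun j => t * (b j * x ^ j) :=
    (aux_summable hbsum (habs _ hx)).mul_left t
  have S3 : Summable fun j => w * (b j * y ^ j) :=
    (aux_summable hbsum (habs _ hy)).mul_left w
  have key : ∀ j : ℕ, b j * (t * x + w * y) ^ j ≤ t * (b j * x ^ j) + w * (b j * y ^ j) := by
    intro j
    match j with
    | 0 =>
      simp only [pow_zero, mul_one]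
      have h0 : t * b 0 + w * b 0 = (t + w) * b 0 := by ring
      rw [h0, htw, one_mul]
    | 1 =>
      simp only [pow_one]
      exact le_of_eq (by ring)
    | (j + 2) =>
      have hb : 0 ≤ b (j + 2) := hbnn _ (by omega)
      have hpow := (convexOn_pow (j + 2)).2 (mem_Ici.2 hx.1) (mem_Ici.2 hy.1) ht hw htw
      simp only [smul_eq_mul] at hpow
      calc b (j + 2) * (t * x + w * y) ^ (j + 2)
          ≤ b (j + 2) * (t * x ^ (j + 2) + w * y ^ (j + 2)) :=
            mul_le_mul_of_nonneg_left hpow hb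
        _ = t * (b (j + 2) * x ^ (j + 2)) + w * (b (j + 2) * y ^ (j + 2)) := by ring
  calc (∑' j : ℕ, b j * (t * x + w * y) ^ j)
      ≤ ∑' j : ℕ, (t * (b j * x ^ j) + w * (b j * y ^ j)) :=
        Summable.tsum_le_tsum key S1 (S2.add S3)
    _ = t * (∑' j : ℕ, b j * x ^ j) + w * (∑' j : ℕ, b j * y ^ j) := by
        rw [Summable.tsum_add S2 S3, tsum_mul_left, tsum_mul_left]

lemma aux_analytic (hbsum : Summable b) {s : ℝ} (hs : |s| < 1) :
    AnalyticAt ℝ (fun x : ℝ => ∑' j : ℕ, b j * x ^ j) s := by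
  set p := FormalMultilinearSeries.ofScalars ℝ b with hp
  have hnorm : Summable fun n : ℕ => ‖p n‖ * ((1 : ℝ≥0) : ℝ) ^ n := by
    refine hbsum.abs.congr fun n => ?_
    rw [hp, FormalMultilinearSeries.ofScalars_norm]
    simp [Real.norm_eq_abs]
  have hrad : (1 : ℝ≥0∞) ≤ p.radius := by
    simpa using p.le_radius_of_summable_norm hnorm
  have hball : HasFPowerSeriesOnBall p.sum p 0 p.radius :=
    p.hasFPowerSeriesOnBall (lt_of_lt_of_le one_pos hrad)
  have hfeq : (fun x : ℝ => ∑' j : ℕ, b j * x ^ j) = p.sum := by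
    funext x
    have h1 : p.sum x = ∑' n : ℕ, p n fun _ => x := rfl
    rw [h1]
    exact tsum_congr fun n => by
      rw [hp, FormalMultilinearSeries.ofScalars_apply_eq, smul_eq_mul]
  have hmem : s ∈ Metric.eball (0 : ℝ) p.radius := by
    rw [Metric.mem_eball, edist_zero_right]
    refine lt_of_lt_of_le ?_ hrad
    change ((‖s‖₊ : ℝ≥0) : ℝ≥0∞) < ((1 : ℝ≥0) : ℝ≥0∞)
    rw [ENNReal.coe_lt_coe, ← NNReal.coe_lt_coe]
    simpa [Real.norm_eq_abs] using hs
  rw [hfeq]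
  exact hball.analyticAt_of_mem hmem

end Aux

theorem stmt3 (c : ℕ) (hc : 1 ≤ c) (b : ℕ → ℝ)
    (hbnn : ∀ j : ℕ, j ≠ 1 → 0 ≤ b j) (hb0 : 0 < b 0)
    (hbsum : Summable b) (hbzero : (∑' j : ℕ, b j) = 0)
    (hb2 : 0 < ∑' j : ℕ, b (j + 2))
    (u : ℝ → ℝ)
    (hu : ∀ lam : ℝ, 0 < lam → u lam ∈ Set.Ioo (0 : ℝ) 1 ∧ Bi b c (u lam) = lam * u lam) :
    ContDiffOn ℝ (⊤ : ℕ∞) u (Set.Ioi 0) := by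
  -- the value of Bi at 1
  have hBi1 : Bi b c 1 = 0 := by
    simp [Bi, hbzero]
  -- convexity of `s ↦ Bi b c s - lam * s` on `[0,1]`
  have hGconv : ∀ lam : ℝ, ConvexOn ℝ (Icc (0:ℝ) 1) (fun s => Bi b c s - lam * s) := by
    intro lam
    have haff : ConvexOn ℝ (Icc (0:ℝ) 1)
        (fun s => ((c:ℝ) - 1) * b 0 * (1 - s) - lam * s) := by
      refine ⟨convex_Icc _ _, fun x _ y _ t w ht hw htw => le_of_eq ?_⟩
      simp only [smul_eq_mul]
      have hts : t = 1 - w := by linarith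
      subst hts; ring
    have h := (aux_convex hbnn hbsum).add haff
    have heq : (fun s => Bi b c s - lam * s)
        = ((fun s : ℝ => ∑' j : ℕ, b j * s ^ j)
            + fun s => ((c:ℝ) - 1) * b 0 * (1 - s) - lam * s) := by
      funext s; simp [Bi]; ring
    rw [heq]; exact h
  -- uniqueness of the root in (0,1)
  have huniq : ∀ lam : ℝ, 0 < lam → ∀ x ∈ Ioo (0:ℝ) 1, Bi b c x = lam * x →
      ∀ y ∈ Ioo (0:ℝ) 1, Bi b c y = lam * y → x = y := by
    have key : ∀ lam : ℝ, 0 < lam → ∀ x ∈ Ioo (0:ℝ) 1, Bi b c x = lam * x →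
        ∀ y ∈ Ioo (0:ℝ) 1, Bi b c y = lam * y → ¬ x < y := by
      intro lam hlam x hx hxr y hy hyr hxy
      have h := (hGconv lam).slope_mono_adjacent
        (show x ∈ Icc (0:ℝ) 1 from ⟨hx.1.le, hx.2.le⟩)
        (show (1:ℝ) ∈ Icc (0:ℝ) 1 from ⟨zero_le_one, le_rfl⟩) hxy hy.2
      have hGx : Bi b c x - lam * x = 0 := by rw [hxr]; ring
      have hGy : Bi b c y - lam * y = 0 := by rw [hyr]; ring
      have hG1 : Bi b c 1 - lam * 1 = -lam := by rw [hBi1]; ring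
      rw [hGx, hGy, hG1] at h
      have h1y : 0 < 1 - y := by linarith [hy.2]
      have h2 : (0:ℝ) ≤ (-lam - 0) / (1 - y) := by
        have h3 : ((0:ℝ) - 0) / (y - x) = 0 := by simp
        linarith [h]
      have h4 : (-lam - 0) / (1 - y) < 0 := div_neg_of_neg_of_pos (by linarith) h1y
      linarith
    intro lam hlam x hx hxr y hy hyr
    rcases lt_trichotomy x y with h | h | h
    · exact absurd h (key lam hlam x hx hxr y hy hyr)
    · exact h
    · exact absurd h (key lam hlam y hy hyr x hx hxr)
  rw [isOpen_Ioi.contDiffOn_iff]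
  intro lam0 hlam0
  obtain ⟨hs0, heq0⟩ := hu lam0 (mem_Ioi.1 hlam0)
  set s0 : ℝ := u lam0 with hs0def
  have hs0pos : 0 < s0 := hs0.1
  have hs0lt1 : s0 < 1 := hs0.2
  have hs0ne : s0 ≠ 0 := ne_of_gt hs0pos
  -- smoothness of Bi at s0
  have hana : AnalyticAt ℝ (fun x : ℝ => ∑' j : ℕ, b j * x ^ j) s0 :=
    aux_analytic hbsum (by rw [abs_lt]; constructor <;> linarith)
  have hBic : ContDiffAt ℝ (⊤ : ℕ∞) (Bi b c) s0 := by
    have h1 : ContDiffAt ℝ (⊤ : ℕ∞) (fun x : ℝ => ∑' j : ℕ, b j * x ^ j) s0 :=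
      hana.contDiffAt
    have h2 : ContDiff ℝ (⊤ : ℕ∞) (fun s : ℝ => ((c:ℝ) - 1) * b 0 * (1 - s)) :=
      contDiff_const.mul (contDiff_const.sub contDiff_id)
    exact h1.add h2.contDiffAt
  -- derivative of Bi at s0
  have hBid : DifferentiableAt ℝ (Bi b c) s0 :=
    hBic.differentiableAt (by simp)
  set D : ℝ := deriv (Bi b c) s0 with hD
  have hBi' : HasDerivAt (Bi b c) D s0 := hBid.hasDerivAt
  -- the derivative of Bi at the root is < lam0
  have hDlt : D - lam0 < 0 := by
    have hG' : HasDerivAt (fun s => Bi b c s - lam0 * s) (D - lam0) s0 := by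
      have h := hBi'.sub ((hasDerivAt_id' s0).const_mul lam0)
      simp only [mul_one] at h
      exact h
    have hsl := (hGconv lam0).le_slope_of_hasDerivAt
      (show s0 ∈ Icc (0:ℝ) 1 from ⟨hs0pos.le, hs0lt1.le⟩)
      (show (1:ℝ) ∈ Icc (0:ℝ) 1 from ⟨zero_le_one, le_rfl⟩) hs0lt1 hG'
    rw [slope_def_field] at hsl
    have hGs0 : Bi b c s0 - lam0 * s0 = 0 := by rw [heq0]; ring
    have hG1 : Bi b c 1 - lam0 * 1 = -lam0 := by rw [hBi1]; ring
    rw [hGs0, hG1] at hsl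
    have h1s : 0 < 1 - s0 := by linarith
    have : (-lam0 - 0) / (1 - s0) < 0 :=
      div_neg_of_neg_of_pos (by linarith [mem_Ioi.1 hlam0]) h1s
    linarith
  -- the auxiliary function g s = Bi b c s / s
  set g : ℝ → ℝ := fun s => Bi b c s / s with hgdef
  have hgc : ContDiffAt ℝ (⊤ : ℕ∞) g s0 := hBic.div contDiffAt_id hs0ne
  set k : ℝ := (D - lam0) / s0 with hk
  have hkneg : k < 0 := div_neg_of_neg_of_pos hDlt hs0pos
  have hkne : k ≠ 0 := ne_of_lt hkneg
  have hg' : HasDerivAt g k s0 := by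
    have h := hBi'.div (hasDerivAt_id s0) hs0ne
    simp only [id_eq] at h
    have hval : (D * s0 - Bi b c s0 * 1) / s0 ^ 2 = k := by
      rw [heq0, hk]; field_simp
    rwa [hval] at h
  have hgF : HasFDerivAt g
      (ContinuousLinearEquiv.unitsEquivAut ℝ (Units.mk0 k hkne) : ℝ →L[ℝ] ℝ) s0 :=
    hg'.hasFDerivAt_equiv hkne
  have hgs0 : g s0 = lam0 := by
    rw [hgdef]; simp only; rw [heq0]
    field_simp
  -- local inverse
  set φ : ℝ → ℝ := hgc.localInverse hgF (by simp) with hφdef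
  have hφc : ContDiffAt ℝ (⊤ : ℕ∞) φ (g s0) := hgc.to_localInverse hgF (by simp)
  have hφs0 : φ (g s0) = s0 := hgc.localInverse_apply_image hgF (by simp)
  have hrinv : ∀ᶠ y in 𝓝 (g s0), g (φ y) = y :=
    (hgc.hasStrictFDerivAt' hgF (by simp)).eventually_right_inverse
  rw [hgs0] at hφc hφs0 hrinv
  -- eventually φ lam ∈ (0,1)
  have hnear : ∀ᶠ lam in 𝓝 lam0, φ lam ∈ Ioo (0:ℝ) 1 := by
    have := hφc.continuousAt.preimage_mem_nhds
      (isOpen_Ioo.mem_nhds (show φ lam0 ∈ Ioo (0:ℝ) 1 by rw [hφs0]; exact hs0))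
    exact this
  have hpos : ∀ᶠ lam in 𝓝 lam0, (0:ℝ) < lam := eventually_gt_nhds (mem_Ioi.1 hlam0)
  have hueq : u =ᶠ[𝓝 lam0] φ := by
    filter_upwards [hrinv, hnear, hpos] with lam h1 h2 h3
    have hroot : Bi b c (φ lam) = lam * (φ lam) := by
      have := h1
      rw [hgdef] at this
      simp only at this
      exact (div_eq_iff (ne_of_gt h2.1)).1 this
    exact huniq lam h3 (u lam) (hu lam h3).1 (hu lam h3).2 (φ lam) h2 hroot
  exact hφc.congr_of_eventuallyEq hueq
end

section
/- Suppose ∑_{j≥2} (j−1) b_j ≥ c·b_0, where the sum is taken in [0,+∞] (i.e. B_c′(1) ≥ 0, including the divergent case). Then for every positive integer k, (1 − u(λ)^k)/λ → +∞ as λ → 0+. -/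
open Set Filter Topology
open scoped ENNReal

noncomputable def phi7 (b : ℕ → ℝ) (c : ℕ) (s : ℝ) : ℝ :=
  (c : ℝ) * b 0 - ∑' j : ℕ, b (j + 2) * ∑ i ∈ Finset.range (j + 1), s ^ (i + 1)

lemma geom_bound {s : ℝ} (hs0 : 0 ≤ s) (hs1 : s < 1) (n : ℕ) :
    ∑ i ∈ Finset.range n, s ^ (i + 1) ≤ (1 - s)⁻¹ := by
  have h1 : ∑ i ∈ Finset.range n, s ^ (i + 1) ≤ ∑ i ∈ Finset.range n, s ^ i :=
    Finset.sum_le_sum fun i _ => pow_le_pow_of_le_one hs0 hs1.le (Nat.le_succ i)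
  have h2 : ∑ i ∈ Finset.range n, s ^ i = (1 - s ^ n) / (1 - s) := by
    rw [geom_sum_eq hs1.ne, div_eq_div_iff (by linarith) (by linarith)]; ring
  have hsn : 0 ≤ s ^ n := pow_nonneg hs0 n
  have h3 : (1 - s ^ n) / (1 - s) ≤ 1 / (1 - s) := by gcongr <;> linarith
  rw [one_div] at h3
  linarith

section lemmas
variable {b : ℕ → ℝ} {c : ℕ}
variable (hbnn : ∀ j : ℕ, j ≠ 1 → 0 ≤ b j) (hbsum : Summable b)

include hbnn hbsum

lemma summable_g_s7 {s : ℝ} (hs0 : 0 ≤ s) (hs1 : s < 1) :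
    Summable (fun j : ℕ => b (j + 2) * ∑ i ∈ Finset.range (j + 1), s ^ (i + 1)) := by
  have hb2 : Summable (fun j : ℕ => b (j + 2)) := (summable_nat_add_iff 2).2 hbsum
  apply Summable.of_nonneg_of_le
    (fun j => mul_nonneg (hbnn _ (by omega))
      (Finset.sum_nonneg fun i _ => pow_nonneg hs0 _))
    (fun j => ?_) (hb2.mul_right (1 - s)⁻¹)
  exact mul_le_mul_of_nonneg_left (geom_bound hs0 hs1 _) (hbnn _ (by omega))

lemma summable_pow {s : ℝ} (hs0 : 0 ≤ s) (hs1 : s ≤ 1) :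
    Summable (fun j : ℕ => b j * s ^ j) := by
  apply Summable.of_norm
  apply Summable.of_nonneg_of_le (fun j => norm_nonneg _) (fun j => ?_) hbsum.abs
  rw [Real.norm_eq_abs, abs_mul]
  calc |b j| * |s ^ j| ≤ |b j| * 1 := by
        apply mul_le_mul_of_nonneg_left _ (abs_nonneg _)
        rw [abs_pow, abs_of_nonneg hs0]
        exact pow_le_one₀ hs0 hs1
    _ = |b j| := mul_one _

set_option maxHeartbeats 1000000 in
lemma key_identity (hbzero : (∑' j : ℕ, b j) = 0) {s : ℝ} (hs0 : 0 ≤ s) (hs1 : s < 1) :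
    Bi b c s = (1 - s) * phi7 b c s := by
  have hb2 : Summable (fun j : ℕ => b (j + 2)) := (summable_nat_add_iff 2).2 hbsum
  have hpow : Summable (fun j : ℕ => b j * s ^ j) := summable_pow hbnn hbsum hs0 hs1.le
  have hpow2 : Summable (fun j : ℕ => b (j + 2) * s ^ (j + 2)) :=
    (summable_nat_add_iff 2).2 hpow
  -- split the tsum
  have hsplit : ∑' j : ℕ, b j * s ^ j
      = b 0 + b 1 * s + ∑' j : ℕ, b (j + 2) * s ^ (j + 2) := by
    rw [← Summable.sum_add_tsum_nat_add 2 hpow]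
    simp [Finset.sum_range_succ]
  have hbsplit : b 0 + b 1 + ∑' j : ℕ, b (j + 2) = 0 := by
    rw [← hbzero, ← Summable.sum_add_tsum_nat_add 2 hbsum]
    simp [Finset.sum_range_succ]
  have hb1 : b 1 = -(b 0 + ∑' j : ℕ, b (j + 2)) := by linarith
  -- rewrite difference of tsums
  have hdiff : (∑' j : ℕ, b (j + 2)) * s - ∑' j : ℕ, b (j + 2) * s ^ (j + 2)
      = (1 - s) * ∑' j : ℕ, b (j + 2) * ∑ i ∈ Finset.range (j + 1), s ^ (i + 1) := by
    rw [← tsum_mul_right, ← Summable.tsum_sub (hb2.mul_right s) hpow2, ← tsum_mul_left]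
    apply tsum_congr
    intro j
    have : (∑ i ∈ Finset.range (j + 1), s ^ i) * (s - 1) = s ^ (j + 1) - 1 :=
      geom_sum_mul s (j + 1)
    have hfac : ∑ i ∈ Finset.range (j + 1), s ^ (i + 1)
        = s * ∑ i ∈ Finset.range (j + 1), s ^ i := by
      rw [Finset.mul_sum]
      exact Finset.sum_congr rfl fun i _ => by ring
    rw [hfac]
    linear_combination (b (j + 2) * s) * this
  unfold Bi phi7
  rw [hsplit, hb1]
  linear_combination -hdiff

lemma phi7_antitone {s t : ℝ} (hs0 : 0 ≤ s) (hst : s ≤ t) (ht1 : t < 1) :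
    phi7 b c t ≤ phi7 b c s := by
  unfold phi7
  have h : (∑' j : ℕ, b (j + 2) * ∑ i ∈ Finset.range (j + 1), s ^ (i + 1))
      ≤ ∑' j : ℕ, b (j + 2) * ∑ i ∈ Finset.range (j + 1), t ^ (i + 1) := by
    apply Summable.tsum_le_tsum _ (summable_g_s7 hbnn hbsum hs0 (lt_of_le_of_lt hst ht1))
      (summable_g_s7 hbnn hbsum (hs0.trans hst) ht1)
    intro j
    apply mul_le_mul_of_nonneg_left _ (hbnn _ (by omega))
    exact Finset.sum_le_sum fun i _ => pow_le_pow_left₀ hs0 hst _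
  linarith

lemma phi7_pos_at_root (hbzero : (∑' j : ℕ, b j) = 0) {lam s : ℝ} (hlam : 0 < lam)
    (hs : s ∈ Set.Ioo (0 : ℝ) 1) (heq : Bi b c s = lam * s) : 0 < phi7 b c s := by
  have hkey := key_identity hbnn hbsum (c := c) hbzero hs.1.le hs.2
  have h1s : 0 < 1 - s := by linarith [hs.2]
  have h2 : 0 < (1 - s) * phi7 b c s := by
    rw [← hkey, heq]; exact mul_pos hlam hs.1
  nlinarith [h2]

lemma phi7_small (hb0 : 0 < b 0)
    (hge : ENNReal.ofReal ((c : ℝ) * b 0) ≤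
      ∑' j : ℕ, ENNReal.ofReal (((j : ℝ) + 1) * b (j + 2)))
    (hc : 1 ≤ c) {δ : ℝ} (hδ : 0 < δ) : ∃ s : ℝ, 1/2 ≤ s ∧ s < 1 ∧ phi7 b c s < δ := by
  have hcb0 : 0 < (c : ℝ) * b 0 := by
    have : (1 : ℝ) ≤ (c : ℝ) := by exact_mod_cast hc
    nlinarith
  have hlt : ENNReal.ofReal ((c : ℝ) * b 0 - δ / 2)
      < ∑' j : ℕ, ENNReal.ofReal (((j : ℝ) + 1) * b (j + 2)) := by
    refine lt_of_lt_of_le ?_ hge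
    rw [ENNReal.ofReal_lt_ofReal_iff hcb0]
    linarith
  rw [ENNReal.tsum_eq_iSup_sum] at hlt
  obtain ⟨F, hF⟩ := lt_iSup_iff.mp hlt
  set A : ℝ := ∑ j ∈ F, ((j : ℝ) + 1) * b (j + 2) with hA_def
  have hterm : ∀ j ∈ F, 0 ≤ ((j : ℝ) + 1) * b (j + 2) := fun j _ =>
    mul_nonneg (by positivity) (hbnn _ (by omega))
  have hFsum : ∑ j ∈ F, ENNReal.ofReal (((j : ℝ) + 1) * b (j + 2))
      = ENNReal.ofReal A := by
    rw [hA_def, ENNReal.ofReal_sum_of_nonneg hterm]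
  rw [hFsum] at hF
  have hA : (c : ℝ) * b 0 - δ / 2 < A := by
    by_contra h
    exact absurd (ENNReal.ofReal_le_ofReal (not_lt.mp h)) (not_le.mpr hF)
  set N : ℕ := F.sup id + 1 with hN_def
  have hjN : ∀ j ∈ F, j + 1 ≤ N := fun j hj =>
    Nat.succ_le_succ (Finset.le_sup (f := id) hj)
  -- find s close to 1
  have hcont : ContinuousAt (fun s : ℝ => s ^ N * A) 1 := by fun_prop
  have hf1 : (c : ℝ) * b 0 - δ < (1 : ℝ) ^ N * A := by
    rw [one_pow, one_mul]; linarith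
  have hev1 : ∀ᶠ s in 𝓝 (1 : ℝ), (c : ℝ) * b 0 - δ < s ^ N * A :=
    hcont.eventually (eventually_gt_nhds hf1)
  have hev2 : ∀ᶠ s in 𝓝 (1 : ℝ), (1 : ℝ) / 2 < s :=
    eventually_gt_nhds (by norm_num)
  have hev : ∀ᶠ s in 𝓝[<] (1 : ℝ),
      ((c : ℝ) * b 0 - δ < s ^ N * A ∧ (1 : ℝ) / 2 < s) ∧ s < 1 := by
    refine Filter.Eventually.and ?_ ?_
    · exact nhdsWithin_le_nhds (hev1.and hev2)
    · exact eventually_mem_nhdsWithin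
  obtain ⟨s, ⟨⟨hs1, hs2⟩, hs3⟩⟩ := hev.exists
  have hs0 : (0 : ℝ) ≤ s := by linarith
  refine ⟨s, by linarith, hs3, ?_⟩
  -- now estimate phi7
  have hsummg := summable_g_s7 hbnn hbsum hs0 hs3
  have hgnn : ∀ j : ℕ, 0 ≤ b (j + 2) * ∑ i ∈ Finset.range (j + 1), s ^ (i + 1) :=
    fun j => mul_nonneg (hbnn _ (by omega)) (Finset.sum_nonneg fun i _ => pow_nonneg hs0 _)
  have h1 : ∑ j ∈ F, b (j + 2) * ∑ i ∈ Finset.range (j + 1), s ^ (i + 1)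
      ≤ ∑' j : ℕ, b (j + 2) * ∑ i ∈ Finset.range (j + 1), s ^ (i + 1) :=
    Summable.sum_le_tsum F (fun j _ => hgnn j) hsummg
  have h2 : s ^ N * A ≤ ∑ j ∈ F, b (j + 2) * ∑ i ∈ Finset.range (j + 1), s ^ (i + 1) := by
    rw [hA_def, Finset.mul_sum]
    apply Finset.sum_le_sum
    intro j hj
    have hinner : ((j : ℝ) + 1) * s ^ N ≤ ∑ i ∈ Finset.range (j + 1), s ^ (i + 1) := by
      have := Finset.sum_le_sum (s := Finset.range (j + 1))
        (f := fun _ : ℕ => s ^ N) (g := fun i : ℕ => s ^ (i + 1))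
        (fun i hi => by
          apply pow_le_pow_of_le_one hs0 hs3.le
          have h1 : i < j + 1 := Finset.mem_range.mp hi
          have h2 := hjN j hj
          omega)
      simpa [Finset.sum_const, Finset.card_range, nsmul_eq_mul] using this
    have hb : 0 ≤ b (j + 2) := hbnn _ (by omega)
    calc s ^ N * (((j : ℝ) + 1) * b (j + 2))
        = b (j + 2) * (((j : ℝ) + 1) * s ^ N) := by ring
      _ ≤ b (j + 2) * ∑ i ∈ Finset.range (j + 1), s ^ (i + 1) :=
          mul_le_mul_of_nonneg_left hinner hb
  unfold phi7
  linarith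

end lemmas

theorem stmt7 (c : ℕ) (hc : 1 ≤ c) (b : ℕ → ℝ)
    (hbnn : ∀ j : ℕ, j ≠ 1 → 0 ≤ b j) (hb0 : 0 < b 0)
    (hbsum : Summable b) (hbzero : (∑' j : ℕ, b j) = 0)
    (hb2 : 0 < ∑' j : ℕ, b (j + 2))
    (u : ℝ → ℝ)
    (hu : ∀ lam : ℝ, 0 < lam → u lam ∈ Set.Ioo (0 : ℝ) 1 ∧ Bi b c (u lam) = lam * u lam)
    (hge : ENNReal.ofReal ((c : ℝ) * b 0) ≤
      ∑' j : ℕ, ENNReal.ofReal (((j : ℝ) + 1) * b (j + 2))) :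
    ∀ k : ℕ, 1 ≤ k →
      Filter.Tendsto (fun lam : ℝ => (1 - u lam ^ k) / lam)
        (nhdsWithin 0 (Set.Ioi 0)) Filter.atTop := by
  intro k hk
  rw [tendsto_atTop]
  intro M
  set M' : ℝ := max M 1 with hM'_def
  have hM' : 0 < M' := lt_of_lt_of_le one_pos (le_max_right _ _)
  have hMM' : M ≤ M' := le_max_left _ _
  obtain ⟨s₁, hs₁half, hs₁lt, hs₁phi⟩ :=
    phi7_small hbnn hbsum hb0 hge hc (δ := 1 / (2 * M')) (by positivity)
  have hs₁0 : (0 : ℝ) ≤ s₁ := by linarith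
  have h1s₁ : (0 : ℝ) < 1 - s₁ := by linarith
  by_cases hcase : phi7 b c s₁ ≤ 0
  · -- Case B : u lam < s₁ always, so (1-u^k)/lam ≥ (1-s₁)/lam → ∞
    filter_upwards [Ioo_mem_nhdsGT_of_mem
      (show (0 : ℝ) ∈ Set.Ico (0 : ℝ) ((1 - s₁) / M') from ⟨le_rfl, by positivity⟩)]
      with lam hlam
    have hlam0 : 0 < lam := hlam.1
    obtain ⟨hIoo, heq⟩ := hu lam hlam0
    have hphi_u := phi7_pos_at_root hbnn hbsum hbzero hlam0 hIoo heq
    have hult : u lam < s₁ := by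
      by_contra h
      push_neg at h
      have := phi7_antitone (c := c) hbnn hbsum hs₁0 h hIoo.2
      linarith
    have hupow : u lam ^ k ≤ u lam :=
      pow_le_of_le_one hIoo.1.le hIoo.2.le (by omega)
    have hlt : lam * M' < 1 - s₁ := by
      have := hlam.2
      rw [lt_div_iff₀ hM'] at this
      linarith
    rw [le_div_iff₀ hlam0]
    nlinarith [mul_le_mul_of_nonneg_right hMM' hlam0.le]
  · -- Case A : u lam > s₁ for small lam
    push_neg at hcase
    filter_upwards [Ioo_mem_nhdsGT_of_mem
      (show (0 : ℝ) ∈ Set.Ico (0 : ℝ) ((1 - s₁) * phi7 b c s₁) from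
        ⟨le_rfl, mul_pos h1s₁ hcase⟩)]
      with lam hlam
    have hlam0 : 0 < lam := hlam.1
    obtain ⟨hIoo, heq⟩ := hu lam hlam0
    have hu0 : 0 < u lam := hIoo.1
    have hu1 : u lam < 1 := hIoo.2
    have hphi_u := phi7_pos_at_root hbnn hbsum hbzero hlam0 hIoo heq
    have hkey : (1 - u lam) * phi7 b c (u lam) = lam * u lam := by
      rw [← key_identity hbnn hbsum hbzero hu0.le hu1, heq]
    have hugt : s₁ < u lam := by
      by_contra h
      push_neg at h
      have hmono := phi7_antitone (c := c) hbnn hbsum hu0.le h hs₁lt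
      have hprod : (1 - s₁) * phi7 b c s₁ ≤ (1 - u lam) * phi7 b c (u lam) :=
        mul_le_mul (by linarith) hmono hcase.le (by linarith)
      have h2 : lam * u lam < lam := by nlinarith
      have := hlam.2
      linarith
    have hphiu : phi7 b c (u lam) < u lam / M' := by
      have hmono := phi7_antitone (c := c) hbnn hbsum hs₁0 hugt.le hu1
      have h1 : 1 / (2 * M') ≤ s₁ / M' := by
        rw [div_le_div_iff₀ (by positivity) hM']
        nlinarith
      have h2 : s₁ / M' < u lam / M' := by gcongr
      linarith
    have hupow : u lam ^ k ≤ u lam :=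
      pow_le_of_le_one hu0.le hu1.le (by omega)
    have hlam_lt : M' * lam < 1 - u lam := by
      have hstep : M' * phi7 b c (u lam) < u lam := by
        rw [lt_div_iff₀ hM'] at hphiu
        linarith
      nlinarith [mul_lt_mul_of_pos_left hstep (show (0:ℝ) < 1 - u lam by linarith), hkey, hu0]
    rw [le_div_iff₀ hlam0]
    nlinarith [mul_le_mul_of_nonneg_right hMM' hlam0.le]
end

section
/- Suppose ∑_{j≥2} (j−1) b_j < c·b_0 (i.e. B_c′(1) < 0). Then for every positive integer k, (1 − u(λ)^k)/λ → k/(c·b_0 − ∑_{j≥2} (j−1) b_j) = k/(−B_c′(1)) as λ → 0+. -/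
open Set Filter Topology

/-!
Since `∑ b_j = 0`, the series factors as `B(s) = (s - 1) G(s)` with
`G(s) = ∑ b_j (1 + s + ⋯ + s^{j-1})`, so `B_c(s) = (1 - s) φ(s)` where `φ = (c - 1) b_0 - G`.
As `b_j ≥ 0` for `j ≠ 1`, `G` is increasing on `[0, 1]`, hence `φ(s) ≥ φ(1) = -B_c'(1) > 0` there.
The equation `(1 - u) φ(u) = λ u` then forces `1 - u ≤ λ / φ(1)`, so `u → 1`, and by continuity
of `φ` at `1` (dominated by `∑ j |b_j| < ∞`), `(1 - u) / λ = u / φ(u) → 1 / φ(1)`.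
Finally `1 - u^k = (1 - u)(1 + u + ⋯ + u^{k-1})`.
-/

/-- For `s ≠ 1` this is the slope `(B(s) - B(1)) / (s - 1)`; unlike the slope it is continuous
at `s = 1`. -/
noncomputable def slopeSeries (b : ℕ → ℝ) (s : ℝ) : ℝ :=
  ∑' j : ℕ, b j * ∑ i ∈ Finset.range j, s ^ i

section slopeSeries

variable {b : ℕ → ℝ}

lemma abs_mul_geom_sum_le (x : ℝ) (j : ℕ) {s : ℝ} (hs : |s| ≤ 1) :
    |x * ∑ i ∈ Finset.range j, s ^ i| ≤ |x| * j := by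
  rw [abs_mul]
  refine mul_le_mul_of_nonneg_left ?_ (abs_nonneg x)
  calc |∑ i ∈ Finset.range j, s ^ i| ≤ ∑ i ∈ Finset.range j, |s| ^ i := by
        simpa only [abs_pow] using Finset.abs_sum_le_sum_abs (fun i => s ^ i) (Finset.range j)
    _ ≤ ∑ _i ∈ Finset.range j, (1 : ℝ) :=
        Finset.sum_le_sum fun i _ => pow_le_one₀ (n := i) (abs_nonneg s) hs
    _ = j := by simp

lemma summable_slopeSeries_terms (hb : Summable fun j => |b j| * j) {s : ℝ} (hs : |s| ≤ 1) :
    Summable fun j => b j * ∑ i ∈ Finset.range j, s ^ i :=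
  hb.of_norm_bounded fun j => abs_mul_geom_sum_le (b j) j hs

lemma tsum_mul_pow_eq_slopeSeries (hb : Summable b) (hb' : Summable fun j => |b j| * j)
    {s : ℝ} (hs : |s| ≤ 1) :
    ∑' j, b j * s ^ j = (s - 1) * slopeSeries b s + ∑' j, b j := by
  have hterm : ∀ j, b j * s ^ j = (s - 1) * (b j * ∑ i ∈ Finset.range j, s ^ i) + b j := fun j => by
    linear_combination -b j * geom_sum_mul s j
  rw [tsum_congr hterm, ((summable_slopeSeries_terms hb' hs).mul_left _).tsum_add hb,
    tsum_mul_left, slopeSeries]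

lemma continuousOn_slopeSeries (hb : Summable fun j => |b j| * j) :
    ContinuousOn (slopeSeries b) (Icc (-1) 1) :=
  continuousOn_tsum (fun j => by fun_prop) hb fun j _ hs => abs_mul_geom_sum_le (b j) j (abs_le.2 hs)

lemma monotoneOn_slopeSeries (hb : ∀ j, j ≠ 1 → 0 ≤ b j) (hb' : Summable fun j => |b j| * j) :
    MonotoneOn (slopeSeries b) (Icc 0 1) := by
  intro s hs t ht hst
  have habs {x : ℝ} (hx : x ∈ Icc (0 : ℝ) 1) : |x| ≤ 1 := abs_le.2 ⟨by linarith [hx.1], hx.2⟩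
  refine (summable_slopeSeries_terms hb' (habs hs)).tsum_le_tsum (fun j => ?_)
    (summable_slopeSeries_terms hb' (habs ht))
  rcases eq_or_ne j 1 with rfl | hj
  · simp
  · exact mul_le_mul_of_nonneg_left
      (Finset.sum_le_sum fun i _ => pow_le_pow_left₀ hs.1 hst i) (hb j hj)

lemma slopeSeries_one : slopeSeries b 1 = ∑' j, b j * j := by
  simp [slopeSeries]

end slopeSeries

section Bi

variable {b : ℕ → ℝ}

lemma summable_abs_mul_nat (hb : ∀ j, j ≠ 1 → 0 ≤ b j) (hsum : Summable b)
    (hconv : Summable fun j : ℕ => ((j : ℝ) + 1) * b (j + 2)) :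
    Summable fun j => |b j| * j := by
  rw [← summable_nat_add_iff 2]
  refine (hconv.add ((summable_nat_add_iff 2).2 hsum)).congr fun j => ?_
  rw [abs_of_nonneg (hb _ (by omega))]
  push_cast
  ring

lemma tsum_mul_nat_of_tsum_eq_zero (hsum : Summable b) (hb' : Summable fun j => |b j| * j)
    (hzero : ∑' j, b j = 0) (hconv : Summable fun j : ℕ => ((j : ℝ) + 1) * b (j + 2)) :
    ∑' j, b j * j = ∑' j : ℕ, ((j : ℝ) + 1) * b (j + 2) - b 0 := by
  have hb'' : Summable fun j => b j * j :=
    hb'.of_norm_bounded fun j => by rw [Real.norm_eq_abs, abs_mul, Nat.abs_cast]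
  have hsplit := hsum.sum_add_tsum_nat_add 2
  have hsplit' := hb''.sum_add_tsum_nat_add 2
  have hshift : ∑' j : ℕ, b (j + 2) * ((j + 2 : ℕ) : ℝ)
      = ∑' j : ℕ, ((j : ℝ) + 1) * b (j + 2) + ∑' j : ℕ, b (j + 2) := by
    rw [← hconv.tsum_add ((summable_nat_add_iff 2).2 hsum)]
    exact tsum_congr fun j => by push_cast; ring
  simp only [Finset.sum_range_succ, Finset.sum_range_zero, hzero] at hsplit hsplit' ⊢
  push_cast at hsplit' hshift
  linarith

lemma Bi_eq_mul_slopeSeries (c : ℕ) (hsum : Summable b) (hb' : Summable fun j => |b j| * j)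
    (hzero : ∑' j, b j = 0) {s : ℝ} (hs : |s| ≤ 1) :
    Bi b c s = (1 - s) * (((c : ℝ) - 1) * b 0 - slopeSeries b s) := by
  rw [Bi, tsum_mul_pow_eq_slopeSeries hsum hb' hs, hzero]
  ring

end Bi

section Limits

variable {φ u : ℝ → ℝ}

lemma tendsto_one_of_one_sub_mul_eq (hφ : ∀ s ∈ Ioo 0 1, φ 1 ≤ φ s) (hφ1 : 0 < φ 1)
    (hu : ∀ t, 0 < t → u t ∈ Ioo 0 1 ∧ (1 - u t) * φ (u t) = t * u t) :
    Tendsto u (𝓝[>] 0) (𝓝 1) := by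
  have hlower : ∀ t, 0 < t → 1 - t / φ 1 ≤ u t := fun t ht => by
    obtain ⟨⟨hu0, hu1⟩, heq⟩ := hu t ht
    have : (1 - u t) * φ 1 ≤ t := by
      nlinarith [mul_le_mul_of_nonneg_left (hφ _ ⟨hu0, hu1⟩) (sub_nonneg.2 hu1.le)]
    linarith [(le_div_iff₀ hφ1).2 this]
  have hlim : Tendsto (fun t => 1 - t / φ 1) (𝓝[>] 0) (𝓝 1) := by
    simpa using ((tendsto_id.div_const (φ 1)).const_sub 1).mono_left
      (nhdsWithin_le_nhds (a := (0 : ℝ)))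
  refine tendsto_of_tendsto_of_tendsto_of_le_of_le' hlim tendsto_const_nhds ?_ ?_ <;>
    filter_upwards [self_mem_nhdsWithin] with t ht
  exacts [hlower t ht, (hu t ht).1.2.le]

lemma tendsto_one_sub_div_of_one_sub_mul_eq (hcont : ContinuousWithinAt φ (Icc 0 1) 1)
    (hφ : ∀ s ∈ Ioo 0 1, φ 1 ≤ φ s) (hφ1 : 0 < φ 1)
    (hu : ∀ t, 0 < t → u t ∈ Ioo 0 1 ∧ (1 - u t) * φ (u t) = t * u t) :
    Tendsto (fun t => (1 - u t) / t) (𝓝[>] 0) (𝓝 (1 / φ 1)) := by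
  have hu1 := tendsto_one_of_one_sub_mul_eq hφ hφ1 hu
  have hφu : Tendsto (fun t => φ (u t)) (𝓝[>] 0) (𝓝 (φ 1)) := by
    refine hcont.tendsto.comp (tendsto_nhdsWithin_iff.2 ⟨hu1, ?_⟩)
    filter_upwards [self_mem_nhdsWithin] with t ht
    exact Ioo_subset_Icc_self (hu t ht).1
  refine (hu1.div hφu hφ1.ne').congr' ?_
  filter_upwards [self_mem_nhdsWithin] with t (ht : 0 < t)
  obtain ⟨hut, heq⟩ := hu t ht
  show u t / φ (u t) = (1 - u t) / t
  rw [div_eq_div_iff (hφ1.trans_le (hφ _ hut)).ne' ht.ne']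
  linarith

end Limits

lemma Filter.Tendsto.one_sub_pow_div {α : Type*} {l : Filter α} {u v : α → ℝ} {L : ℝ}
    (hu : Tendsto u l (𝓝 1)) (h : Tendsto (fun x => (1 - u x) / v x) l (𝓝 L)) (k : ℕ) :
    Tendsto (fun x => (1 - u x ^ k) / v x) l (𝓝 (k * L)) := by
  have hgeom : Tendsto (fun x => ∑ i ∈ Finset.range k, u x ^ i) l (𝓝 k) := by
    have hcont : Continuous fun s : ℝ => ∑ i ∈ Finset.range k, s ^ i := by fun_prop
    simpa [Function.comp_def] using (hcont.tendsto 1).comp hu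
  rw [mul_comm]
  refine (h.mul hgeom).congr fun x => ?_
  rw [div_mul_eq_mul_div, mul_comm, geom_sum_mul_neg]

theorem stmt8_general (c : ℕ) (b : ℕ → ℝ)
    (hbnn : ∀ j : ℕ, j ≠ 1 → 0 ≤ b j)
    (hbsum : Summable b) (hbzero : (∑' j : ℕ, b j) = 0)
    (u : ℝ → ℝ)
    (hu : ∀ lam : ℝ, 0 < lam → u lam ∈ Set.Ioo (0 : ℝ) 1 ∧ Bi b c (u lam) = lam * u lam)
    (hconv : Summable (fun j : ℕ => ((j : ℝ) + 1) * b (j + 2)))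
    (hlt : (∑' j : ℕ, ((j : ℝ) + 1) * b (j + 2)) < (c : ℝ) * b 0) :
    ∀ k : ℕ, 1 ≤ k →
      Filter.Tendsto (fun lam : ℝ => (1 - u lam ^ k) / lam)
        (nhdsWithin 0 (Set.Ioi 0))
        (nhds ((k : ℝ) / ((c : ℝ) * b 0 - ∑' j : ℕ, ((j : ℝ) + 1) * b (j + 2)))) := by
  intro k _
  set D := (c : ℝ) * b 0 - ∑' j : ℕ, ((j : ℝ) + 1) * b (j + 2)
  have hb' := summable_abs_mul_nat hbnn hbsum hconv
  set φ := fun s => ((c : ℝ) - 1) * b 0 - slopeSeries b s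
  have hφ1 : φ 1 = D := by
    simp only [φ, D, slopeSeries_one, tsum_mul_nat_of_tsum_eq_zero hbsum hb' hbzero hconv]
    ring
  have hφ : ∀ s ∈ Ioo 0 1, φ 1 ≤ φ s := fun s hs =>
    sub_le_sub_left (monotoneOn_slopeSeries hbnn hb' (Ioo_subset_Icc_self hs)
      (right_mem_Icc.2 zero_le_one) hs.2.le) _
  have hcont : ContinuousWithinAt φ (Icc 0 1) 1 :=
    (continuous_const.continuousOn.sub (continuousOn_slopeSeries hb')).mono
      (Icc_subset_Icc_left (by norm_num)) 1 (right_mem_Icc.2 zero_le_one)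
  have hroot : ∀ t, 0 < t → u t ∈ Ioo 0 1 ∧ (1 - u t) * φ (u t) = t * u t := fun t ht => by
    obtain ⟨hut, heq⟩ := hu t ht
    refine ⟨hut, ?_⟩
    rwa [← Bi_eq_mul_slopeSeries c hbsum hb' hbzero (abs_le.2 ⟨by linarith [hut.1], hut.2.le⟩)]
  have hφ1_pos : 0 < φ 1 := hφ1 ▸ sub_pos.2 hlt
  have hlim := (tendsto_one_of_one_sub_mul_eq hφ hφ1_pos hroot).one_sub_pow_div
    (tendsto_one_sub_div_of_one_sub_mul_eq hcont hφ hφ1_pos hroot) k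
  rwa [hφ1, mul_one_div] at hlim

theorem stmt8 (c : ℕ) (hc : 1 ≤ c) (b : ℕ → ℝ)
    (hbnn : ∀ j : ℕ, j ≠ 1 → 0 ≤ b j) (hb0 : 0 < b 0)
    (hbsum : Summable b) (hbzero : (∑' j : ℕ, b j) = 0)
    (hb2 : 0 < ∑' j : ℕ, b (j + 2))
    (u : ℝ → ℝ)
    (hu : ∀ lam : ℝ, 0 < lam → u lam ∈ Set.Ioo (0 : ℝ) 1 ∧ Bi b c (u lam) = lam * u lam)
    (hconv : Summable (fun j : ℕ => ((j : ℝ) + 1) * b (j + 2)))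
    (hlt : (∑' j : ℕ, ((j : ℝ) + 1) * b (j + 2)) < (c : ℝ) * b 0) :
    ∀ k : ℕ, 1 ≤ k →
      Filter.Tendsto (fun lam : ℝ => (1 - u lam ^ k) / lam)
        (nhdsWithin 0 (Set.Ioi 0))
        (nhds ((k : ℝ) / ((c : ℝ) * b 0 - ∑' j : ℕ, ((j : ℝ) + 1) * b (j + 2)))) :=
  stmt8_general c b hbnn hbsum hbzero u hu hconv hlt
end

section
/- For every s ∈ [0,1] the identity λ·∑_{j=0}^∞ φ_j s^j − s^i = ∑_{k=1}^{c−1} s^{k−1} B_k(s) φ_k + B_c(s)·∑_{j=c}^∞ φ_j s^{j−1} holds, all series involved converging absolutely. -/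
/-!
Multiply the `n`-th forward equation by `s ^ n` and sum over `n`. Written with
`m(n) = min n c` busy servers, the left-hand side of equation `n` is the `n`-th coefficient of
`B(s) · ∑ φ_{k+1} s^k + b_0 (1 - s) · ∑ (m(k+1) - 1) φ_{k+1} s^k`, a Cauchy product plus a
telescoping series, and for `|s| ≤ 1` all series converge absolutely, so the rearrangements are
legitimate. Termwise this generating function is `∑ s^k B_{m(k+1)}(s) φ_{k+1}`, whose first
`c - 1` terms are the finite sum of the claim and whose tail is `B_c(s) ∑_{j ≥ c} φ_j s^(j-1)`.
-/

open Set Filter Topology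

open Finset

section PowerSeries

variable {s : ℝ}

theorem Summable.norm_mul_pow_of_abs_le_one {f : ℕ → ℝ} (hf : Summable f) (hs : |s| ≤ 1)
    (e : ℕ → ℕ) : Summable fun n => ‖f n * s ^ e n‖ :=
  hf.abs.of_nonneg_of_le (fun _ => norm_nonneg _) fun n => by
    rw [norm_mul, norm_pow, Real.norm_eq_abs, Real.norm_eq_abs]
    exact mul_le_of_le_one_right (abs_nonneg _) (pow_le_one₀ (abs_nonneg _) hs)

theorem Summable.mul_pow_of_abs_le_one {f : ℕ → ℝ} (hf : Summable f) (hs : |s| ≤ 1)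
    (e : ℕ → ℕ) : Summable fun n => f n * s ^ e n :=
  (hf.norm_mul_pow_of_abs_le_one hs e).of_norm

theorem hasSum_sum_antidiagonal_mul_pow {f g : ℕ → ℝ} (hf : Summable f) (hg : Summable g)
    (hs : |s| ≤ 1) :
    HasSum (fun n => (∑ p ∈ antidiagonal n, f p.1 * g p.2) * s ^ n)
      ((∑' n, f n * s ^ n) * ∑' n, g n * s ^ n) := by
  have hf' := hf.norm_mul_pow_of_abs_le_one hs fun n => n
  have hg' := hg.norm_mul_pow_of_abs_le_one hs fun n => n
  have hcoeff : (fun n => (∑ p ∈ antidiagonal n, f p.1 * g p.2) * s ^ n) =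
      fun n => ∑ p ∈ antidiagonal n, f p.1 * s ^ p.1 * (g p.2 * s ^ p.2) := by
    funext n
    rw [sum_mul]
    refine sum_congr rfl fun p hp => ?_
    rw [← mem_antidiagonal.1 hp, pow_add]
    ring
  rw [hcoeff, tsum_mul_tsum_eq_tsum_sum_antidiagonal_of_summable_norm hf' hg']
  exact (summable_norm_sum_mul_antidiagonal_of_summable_norm hf' hg').of_norm.hasSum

theorem hasSum_sub_mul_pow {v : ℕ → ℝ} (hv0 : v 0 = 0)
    (hv : Summable fun n => v (n + 1) * s ^ n) :
    HasSum (fun n => (v (n + 1) - v n) * s ^ n) ((1 - s) * ∑' n, v (n + 1) * s ^ n) := by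
  have hshift : HasSum (fun n => v n * s ^ n) (s * ∑' n, v (n + 1) * s ^ n) := by
    rw [← hasSum_nat_add_iff' 1]
    simpa [hv0, pow_succ', mul_left_comm s] using hv.hasSum.mul_left s
  simpa [sub_mul] using hv.hasSum.sub hshift

end PowerSeries

theorem sum_range_succ_eq_sum_Icc {M : Type*} [AddCommMonoid M] (f : ℕ → M) (m : ℕ) :
    ∑ k ∈ range m, f (k + 1) = ∑ k ∈ Icc 1 m, f k := by
  rw [range_eq_Ico, sum_Ico_add', ← Finset.Ico_add_one_right_eq_Icc, zero_add]

theorem sum_antidiagonal_succ_eq {b φ : ℕ → ℝ} (m : ℕ) :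
    ∑ p ∈ antidiagonal (m + 1), b p.1 * φ (p.2 + 1) =
      (∑ k ∈ Icc 1 m, b (m + 1 - k + 1) * φ k) + b 1 * φ (m + 1) + b 0 * φ (m + 2) := by
  rw [← Nat.sum_antidiagonal_swap, Nat.sum_antidiagonal_eq_sum_range_succ_mk, sum_range_succ,
    sum_range_succ, ← sum_range_succ_eq_sum_Icc]
  refine congrArg₂ _ (congrArg₂ _ (sum_congr rfl fun k hk => ?_) ?_) ?_ <;>
    simp only [Prod.swap_prod_mk]
  · rw [show m + 1 - (k + 1) + 1 = m + 1 - k by simp only [Finset.mem_range] at hk; omega]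
  · rw [Nat.add_sub_cancel_left]
  · rw [Nat.sub_self]

theorem tsum_comp_min_succ {c : ℕ} (hc : 1 ≤ c) (G a : ℕ → ℝ)
    (h : Summable fun k => G (min (k + 1) c) * a (k + 1)) :
    ∑' k, G (min (k + 1) c) * a (k + 1) = ∑ k ∈ Icc 1 (c - 1), G k * a k + G c * ∑' j, a (j + c) := by
  rw [← h.sum_add_tsum_nat_add (c - 1), ← sum_range_succ_eq_sum_Icc, ← tsum_mul_left]
  congr 1
  · refine sum_congr rfl fun k hk => ?_
    rw [min_eq_left (by simp only [Finset.mem_range] at hk; omega)]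
  · refine tsum_congr fun k => ?_
    rw [show k + (c - 1) + 1 = k + c by omega, min_eq_right (by omega)]

structure ForwardEquations (c : ℕ) (b : ℕ → ℝ) (lam : ℝ) (i : ℕ) (φ : ℕ → ℝ) : Prop where
  zero : -lam * φ 0 + b 0 * φ 1 = -(if i = 0 then (1 : ℝ) else 0)
  mid : ∀ j : ℕ, 1 ≤ j → j ≤ c - 1 →
    (∑ k ∈ Finset.Icc 1 (j - 1), b (j - k + 1) * φ k) +
      (b 1 - ((j : ℝ) - 1) * b 0 - lam) * φ j + ((j : ℝ) + 1) * b 0 * φ (j + 1) =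
        -(if i = j then (1 : ℝ) else 0)
  tail : ∀ j : ℕ, c ≤ j →
    (∑ k ∈ Finset.Icc 1 (j - 1), b (j - k + 1) * φ k) +
      (b 1 - ((c : ℝ) - 1) * b 0 - lam) * φ j + (c : ℝ) * b 0 * φ (j + 1) =
        -(if i = j then (1 : ℝ) else 0)

namespace ForwardEquations

variable {c : ℕ} {b : ℕ → ℝ} {lam : ℝ} {i : ℕ} {φ : ℕ → ℝ}

theorem eq_of_one_le (h : ForwardEquations c b lam i φ) {j : ℕ} (hj : 1 ≤ j) :
    (∑ k ∈ Finset.Icc 1 (j - 1), b (j - k + 1) * φ k) +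
        (b 1 - ((min j c : ℕ) - 1) * b 0 - lam) * φ j + (min (j + 1) c : ℕ) * b 0 * φ (j + 1) =
      -(if i = j then (1 : ℝ) else 0) := by
  rcases le_or_gt j (c - 1) with hjc | hcj
  · rw [min_eq_left (by omega), min_eq_left (by omega), Nat.cast_add_one]
    exact h.mid j hj hjc
  · rw [min_eq_right (by omega), min_eq_right (by omega)]
    exact h.tail j (by omega)

/-- `min n c - 1` is truncated subtraction in `ℕ`, so the telescoping term vanishes at `n = 0`. -/
theorem lam_mul_sub_eq (h : ForwardEquations c b lam i φ) (hc : 1 ≤ c) (n : ℕ) :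
    lam * φ n - (if i = n then 1 else 0) =
      (∑ p ∈ antidiagonal n, b p.1 * φ (p.2 + 1)) +
        b 0 * (((min (n + 1) c - 1 : ℕ) : ℝ) * φ (n + 1) - ((min n c - 1 : ℕ) : ℝ) * φ n) := by
  rcases n with _ | m
  · simp only [HasAntidiagonal.antidiagonal_zero, sum_singleton, min_eq_left hc, Nat.zero_min, Nat.sub_self,
      Nat.zero_sub, Nat.cast_zero]
    linarith [h.zero]
  · have hm := h.eq_of_one_le (Nat.le_add_left 1 m)
    rw [Nat.add_sub_cancel] at hm
    rw [sum_antidiagonal_succ_eq, Nat.cast_sub (le_min (by omega) hc),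
      Nat.cast_sub (le_min (by omega) hc)]
    simp only [Nat.cast_one]
    linear_combination -hm

theorem hasSum_Bi_min_mul (h : ForwardEquations c b lam i φ) (hc : 1 ≤ c) (hbsum : Summable b)
    (hφsum : Summable φ) {s : ℝ} (hs : |s| ≤ 1) :
    HasSum (fun k => Bi b (min (k + 1) c) s * (φ (k + 1) * s ^ k))
      (lam * (∑' n, φ n * s ^ n) - s ^ i) := by
  set v : ℕ → ℝ := fun n => ((min n c - 1 : ℕ) : ℝ) * φ n
  have hφ1 : Summable fun n => φ (n + 1) := (summable_nat_add_iff 1).2 hφsum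
  have hv : Summable fun n => v (n + 1) := by
    refine Summable.of_norm_bounded (hφ1.abs.mul_left (c : ℝ)) fun n => ?_
    rw [Real.norm_eq_abs, abs_mul, Nat.abs_cast]
    gcongr
    exact_mod_cast (Nat.sub_le _ _).trans (min_le_right _ _)
  have hv' := hv.mul_pow_of_abs_le_one hs fun n => n
  have hgen : HasSum (fun n => (lam * φ n - if i = n then 1 else 0) * s ^ n)
      ((∑' n, b n * s ^ n) * (∑' n, φ (n + 1) * s ^ n) +
        b 0 * ((1 - s) * ∑' n, v (n + 1) * s ^ n)) :=
    ((hasSum_sum_antidiagonal_mul_pow hbsum hφ1 hs).add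
      ((hasSum_sub_mul_pow (by simp [v]) hv').mul_left (b 0))).congr_fun fun n => by
        rw [h.lam_mul_sub_eq hc]
        ring
  have hpoint : HasSum (fun n => (lam * φ n - if i = n then 1 else 0) * s ^ n)
      (lam * (∑' n, φ n * s ^ n) - s ^ i) :=
    (((hφsum.mul_pow_of_abs_le_one hs fun n => n).hasSum.mul_left lam).sub
      (hasSum_ite_eq i (s ^ i))).congr_fun fun n => by
        by_cases hn : n = i
        · subst hn
          rw [if_pos rfl, if_pos rfl]
          ring
        · rw [if_neg hn, if_neg (Ne.symm hn)]
          ring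
  rw [hpoint.unique hgen]
  refine (((hφ1.mul_pow_of_abs_le_one hs fun n => n).hasSum.mul_left _).add
    ((hv'.hasSum.mul_left (1 - s)).mul_left (b 0))).congr_fun fun k => ?_
  simp only [Bi, v, Nat.cast_sub (le_min (Nat.le_add_left 1 k) hc), Nat.cast_one]
  ring

end ForwardEquations

theorem stmt9_general (c : ℕ) (hc : 1 ≤ c) (b : ℕ → ℝ)
    (hbsum : Summable b)
    (lam : ℝ) (i : ℕ) (φ : ℕ → ℝ)
    (hφsum : Summable φ)
    (heq0 : -lam * φ 0 + b 0 * φ 1 = -(if i = 0 then (1 : ℝ) else 0))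
    (heqmid : ∀ j : ℕ, 1 ≤ j → j ≤ c - 1 →
      (∑ k ∈ Finset.Icc 1 (j - 1), b (j - k + 1) * φ k) +
        (b 1 - ((j : ℝ) - 1) * b 0 - lam) * φ j + ((j : ℝ) + 1) * b 0 * φ (j + 1) =
          -(if i = j then (1 : ℝ) else 0))
    (heqtail : ∀ j : ℕ, c ≤ j →
      (∑ k ∈ Finset.Icc 1 (j - 1), b (j - k + 1) * φ k) +
        (b 1 - ((c : ℝ) - 1) * b 0 - lam) * φ j + (c : ℝ) * b 0 * φ (j + 1) =
          -(if i = j then (1 : ℝ) else 0)) :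
    ∀ s ∈ Set.Icc (0 : ℝ) 1,
      Summable (fun j : ℕ => φ j * s ^ j) ∧
      Summable (fun j : ℕ => φ (j + c) * s ^ (j + c - 1)) ∧
      lam * (∑' j : ℕ, φ j * s ^ j) - s ^ i =
        (∑ k ∈ Finset.Icc 1 (c - 1), s ^ (k - 1) * Bi b k s * φ k) +
          Bi b c s * ∑' j : ℕ, φ (j + c) * s ^ (j + c - 1) := by
  rintro s ⟨hs0, hs1⟩
  have hs : |s| ≤ 1 := abs_le.2 ⟨by linarith, hs1⟩
  refine ⟨hφsum.mul_pow_of_abs_le_one hs fun j => j,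
    ((summable_nat_add_iff c).2 hφsum).mul_pow_of_abs_le_one hs fun j => j + c - 1, ?_⟩
  have hgen := ForwardEquations.hasSum_Bi_min_mul ⟨heq0, heqmid, heqtail⟩ hc hbsum hφsum hs
  rw [← hgen.tsum_eq]
  refine (tsum_comp_min_succ hc (fun m => Bi b m s) (fun k => φ k * s ^ (k - 1))
    hgen.summable).trans ?_
  exact congrArg₂ _ (sum_congr rfl fun k _ => by ring) rfl

theorem stmt9 (c : ℕ) (hc : 1 ≤ c) (b : ℕ → ℝ)
    (hbnn : ∀ j : ℕ, j ≠ 1 → 0 ≤ b j) (hb0 : 0 < b 0)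
    (hbsum : Summable b) (hbzero : (∑' j : ℕ, b j) = 0)
    (hb2 : 0 < ∑' j : ℕ, b (j + 2))
    (lam : ℝ) (hlam : 0 < lam) (i : ℕ) (φ : ℕ → ℝ)
    (hφnn : ∀ j : ℕ, 0 ≤ φ j) (hφsum : Summable φ)
    (heq0 : -lam * φ 0 + b 0 * φ 1 = -(if i = 0 then (1 : ℝ) else 0))
    (heqmid : ∀ j : ℕ, 1 ≤ j → j ≤ c - 1 →
      (∑ k ∈ Finset.Icc 1 (j - 1), b (j - k + 1) * φ k) +
        (b 1 - ((j : ℝ) - 1) * b 0 - lam) * φ j + ((j : ℝ) + 1) * b 0 * φ (j + 1) =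
          -(if i = j then (1 : ℝ) else 0))
    (heqtail : ∀ j : ℕ, c ≤ j →
      (∑ k ∈ Finset.Icc 1 (j - 1), b (j - k + 1) * φ k) +
        (b 1 - ((c : ℝ) - 1) * b 0 - lam) * φ j + (c : ℝ) * b 0 * φ (j + 1) =
          -(if i = j then (1 : ℝ) else 0)) :
    ∀ s ∈ Set.Icc (0 : ℝ) 1,
      Summable (fun j : ℕ => φ j * s ^ j) ∧
      Summable (fun j : ℕ => φ (j + c) * s ^ (j + c - 1)) ∧
      lam * (∑' j : ℕ, φ j * s ^ j) - s ^ i =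
        (∑ k ∈ Finset.Icc 1 (c - 1), s ^ (k - 1) * Bi b k s * φ k) +
          Bi b c s * ∑' j : ℕ, φ (j + c) * s ^ (j + c - 1) :=
  stmt9_general c hc b hbsum lam i φ hφsum heq0 heqmid heqtail
end

section
/- The following linear relation holds: λ·φ_0 + ∑_{k=1}^{c−1} u(λ)^{k−1} (c−k) b_0 (1 − u(λ)) φ_k = u(λ)^i. -/
open Set Filter Topology

/-!
Multiply the forward equation of state `j` by `s ^ j`, `s = u(λ)`, and sum over `j`. For `j ≥ 1` the
equations share one shape, with `min j c` busy servers. The batch-arrival terms sum to the Cauchy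
product `(B(s) - b₀ - b₁ s) Ψ(s)`, where `Ψ(s) = ∑ₖ φₖ₊₁ sᵏ`, and the service terms to multiples of
`M(s) = ∑ₖ min (k + 1) c φₖ₊₁ sᵏ`. Since `B_c(s) = λ s`, the total coefficient of `Ψ(s)` is
`-c b₀ (1 - s)`, so only `c Ψ(s) - M(s)` survives: a finite sum over the states `1, …, c - 1`.
-/

open Finset

lemma Finset.sum_Icc_one_eq_sum_range {M : Type*} [AddCommMonoid M] (f : ℕ → M) (n : ℕ) :
    ∑ k ∈ Icc 1 n, f k = ∑ k ∈ range n, f (k + 1) := by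
  rw [← Ico_add_one_right_eq_Icc, range_eq_Ico, sum_Ico_add' f 0 n 1, zero_add]

section GeneratingFunction

variable {b φ : ℕ → ℝ} {s : ℝ}

lemma summable_norm_mul_pow {a : ℕ → ℝ} (ha : Summable a) (hs : |s| ≤ 1) :
    Summable fun j ↦ ‖a j * s ^ j‖ := by
  refine .of_nonneg_of_le (fun _ ↦ norm_nonneg _) (fun j ↦ ?_) ha.abs
  rw [norm_mul, norm_pow, Real.norm_eq_abs, Real.norm_eq_abs]
  exact mul_le_of_le_one_right (abs_nonneg _) (pow_le_one₀ (abs_nonneg s) hs)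

lemma summable_mul_pow {a : ℕ → ℝ} (ha : Summable a) (hs : |s| ≤ 1) :
    Summable fun j ↦ a j * s ^ j :=
  (summable_norm_mul_pow ha hs).of_norm

def batchInflow (b φ : ℕ → ℝ) (j : ℕ) : ℝ :=
  ∑ k ∈ Icc 1 (j - 1), b (j - k + 1) * φ k

lemma batchInflow_add_two_eq (b φ : ℕ → ℝ) (n : ℕ) (s : ℝ) :
    s ^ (n + 2) * batchInflow b φ (n + 2) =
      ∑ p ∈ antidiagonal n, b (p.1 + 2) * s ^ (p.1 + 2) * (φ (p.2 + 1) * s ^ p.2) := by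
  rw [← Nat.sum_antidiagonal_swap]
  simp only [Prod.fst_swap, Prod.snd_swap]
  rw [Nat.sum_antidiagonal_eq_sum_range_succ
    (fun l m ↦ b (m + 2) * s ^ (m + 2) * (φ (l + 1) * s ^ l)), batchInflow,
    show n + 2 - 1 = n + 1 from rfl, sum_Icc_one_eq_sum_range, mul_sum]
  refine sum_congr rfl fun l hl ↦ ?_
  have hln : l ≤ n := mem_range_succ_iff.mp hl
  rw [show n + 2 - (l + 1) + 1 = n - l + 2 by omega, show n + 2 = (n - l + 2) + l by omega,
    pow_add]
  ring

@[simp]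
lemma batchInflow_zero (b φ : ℕ → ℝ) : batchInflow b φ 0 = 0 := by
  simp [batchInflow]

lemma hasSum_pow_mul_batchInflow (hb : Summable b) (hφ : Summable φ) (hs : |s| ≤ 1) :
    HasSum (fun j ↦ s ^ j * batchInflow b φ j)
      ((∑' m, b (m + 2) * s ^ (m + 2)) * ∑' k, φ (k + 1) * s ^ k) := by
  have hbn : Summable fun m ↦ ‖b (m + 2) * s ^ (m + 2)‖ :=
    (summable_nat_add_iff 2).mpr (summable_norm_mul_pow hb hs)
  have hφn : Summable fun k ↦ ‖φ (k + 1) * s ^ k‖ :=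
    summable_norm_mul_pow ((summable_nat_add_iff 1).mpr hφ) hs
  have hlow : ∑ j ∈ range 2, s ^ j * batchInflow b φ j = 0 := by simp [batchInflow, sum_range_succ]
  rw [← hasSum_nat_add_iff' 2, hlow, sub_zero,
    tsum_mul_tsum_eq_tsum_sum_antidiagonal_of_summable_norm hbn hφn]
  simpa only [batchInflow_add_two_eq] using
    (summable_norm_sum_mul_antidiagonal_of_summable_norm hbn hφn).of_norm.hasSum

def busyServers (c j : ℕ) : ℝ := (min j c : ℕ)

lemma busyServers_of_le {c j : ℕ} (h : j ≤ c) : busyServers c j = j := by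
  simp [busyServers, h]

lemma busyServers_of_ge {c j : ℕ} (h : c ≤ j) : busyServers c j = c := by
  simp [busyServers, h]

lemma summable_busyServers_mul (c : ℕ) (hφ : Summable φ) (hs : |s| ≤ 1) :
    Summable fun k ↦ busyServers c (k + 1) * φ (k + 1) * s ^ k := by
  have hφs := summable_norm_mul_pow ((summable_nat_add_iff 1).mpr hφ) hs
  refine .of_norm_bounded (hφs.mul_left (c : ℝ)) fun k ↦ ?_
  have hbusy : busyServers c (k + 1) ≤ c := by unfold busyServers; exact_mod_cast min_le_right _ _
  rw [mul_assoc, norm_mul, Real.norm_of_nonneg (by unfold busyServers; positivity)]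
  exact mul_le_mul_of_nonneg_right hbusy (norm_nonneg _)

lemma hasSum_pow_mul_forward {c : ℕ} (hc : 1 ≤ c) (lam : ℝ) (hb : Summable b) (hφ : Summable φ)
    (hs : |s| ≤ 1) :
    HasSum (fun n ↦ s ^ (n + 1) * (batchInflow b φ (n + 1) +
        (b 1 - (busyServers c (n + 1) - 1) * b 0 - lam) * φ (n + 1) +
        busyServers c (n + 1 + 1) * b 0 * φ (n + 1 + 1)))
      ((∑' m, b (m + 2) * s ^ (m + 2)) * (∑' k, φ (k + 1) * s ^ k) +
        (b 1 + b 0 - lam) * s * (∑' k, φ (k + 1) * s ^ k) +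
        b 0 * (1 - s) * (∑' k, busyServers c (k + 1) * φ (k + 1) * s ^ k) - b 0 * φ 1) := by
  set Ψ := ∑' k, φ (k + 1) * s ^ k
  set M := ∑' k, busyServers c (k + 1) * φ (k + 1) * s ^ k
  have hI : HasSum (fun n ↦ s ^ (n + 1) * batchInflow b φ (n + 1))
      ((∑' m, b (m + 2) * s ^ (m + 2)) * Ψ) := by
    simpa using (hasSum_nat_add_iff' 1).mpr (hasSum_pow_mul_batchInflow hb hφ hs)
  have hΨ : HasSum (fun k ↦ φ (k + 1) * s ^ k) Ψ :=
    (summable_mul_pow ((summable_nat_add_iff 1).mpr hφ) hs).hasSum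
  have hM : HasSum (fun k ↦ busyServers c (k + 1) * φ (k + 1) * s ^ k) M :=
    (summable_busyServers_mul c hφ hs).hasSum
  have hM1 : HasSum (fun k ↦ busyServers c (k + 1 + 1) * φ (k + 1 + 1) * s ^ (k + 1))
      (M - φ 1) := by
    simpa [busyServers_of_le hc] using (hasSum_nat_add_iff' 1).mpr hM
  convert (hI.add (hΨ.mul_left ((b 1 + b 0 - lam) * s))).add
    ((hM1.mul_left (b 0)).sub (hM.mul_left (b 0 * s))) using 1
  · ext n
    ring
  · ring

lemma mul_tsum_sub_tsum_busyServers (c : ℕ) (hφ : Summable φ) (hs : |s| ≤ 1) :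
    c * ∑' k, φ (k + 1) * s ^ k - ∑' k, busyServers c (k + 1) * φ (k + 1) * s ^ k =
      ∑ k ∈ Icc 1 (c - 1), (c - k : ℝ) * φ k * s ^ (k - 1) := by
  rw [← tsum_mul_left, ← (summable_mul_pow ((summable_nat_add_iff 1).mpr hφ) hs).mul_left _
    |>.tsum_sub (summable_busyServers_mul c hφ hs), sum_Icc_one_eq_sum_range,
    tsum_eq_sum (s := range (c - 1))]
  · refine sum_congr rfl fun k hk ↦ ?_
    rw [busyServers_of_le (by grind), Nat.add_sub_cancel]
    push_cast
    ring
  · intro k hk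
    rw [busyServers_of_ge (by grind)]
    ring

lemma Bi_eq_tsum_add_two (c : ℕ) (hb : Summable b) (hs : |s| ≤ 1) :
    Bi b c s = ∑' m, b (m + 2) * s ^ (m + 2) + (b 1 + b 0) * s + c * b 0 * (1 - s) := by
  rw [Bi, ← (summable_mul_pow hb hs).sum_add_tsum_nat_add 2, sum_range_succ, sum_range_one]
  ring

end GeneratingFunction

theorem stmt10_general (c : ℕ) (hc : 1 ≤ c) (b : ℕ → ℝ) (hbsum : Summable b) (lam : ℝ) (i : ℕ) (φ : ℕ → ℝ)
    (hφsum : Summable φ)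
    (heq0 : -lam * φ 0 + b 0 * φ 1 = -(if i = 0 then (1 : ℝ) else 0))
    (heqmid : ∀ j : ℕ, 1 ≤ j → j ≤ c - 1 →
      (∑ k ∈ Finset.Icc 1 (j - 1), b (j - k + 1) * φ k) +
        (b 1 - ((j : ℝ) - 1) * b 0 - lam) * φ j + ((j : ℝ) + 1) * b 0 * φ (j + 1) =
          -(if i = j then (1 : ℝ) else 0))
    (heqtail : ∀ j : ℕ, c ≤ j →
      (∑ k ∈ Finset.Icc 1 (j - 1), b (j - k + 1) * φ k) +
        (b 1 - ((c : ℝ) - 1) * b 0 - lam) * φ j + (c : ℝ) * b 0 * φ (j + 1) =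
          -(if i = j then (1 : ℝ) else 0))
    (ul : ℝ) (hul : ul ∈ Set.Ioo (0 : ℝ) 1) (hulroot : Bi b c ul = lam * ul) :
    lam * φ 0 +
        (∑ k ∈ Finset.Icc 1 (c - 1),
          ul ^ (k - 1) * ((c : ℝ) - (k : ℝ)) * b 0 * (1 - ul) * φ k) =
      ul ^ i := by
  have hs : |ul| ≤ 1 := abs_le.2 ⟨by linarith [hul.1], hul.2.le⟩
  have hforward : ∀ n : ℕ, batchInflow b φ (n + 1) +
      (b 1 - (busyServers c (n + 1) - 1) * b 0 - lam) * φ (n + 1) +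
      busyServers c (n + 1 + 1) * b 0 * φ (n + 1 + 1) = -(if i = n + 1 then 1 else 0) := by
    intro n
    rcases le_or_gt c (n + 1) with hcn | hnc
    · rw [busyServers_of_ge hcn, busyServers_of_ge (by omega)]
      exact heqtail (n + 1) hcn
    · rw [busyServers_of_le hnc.le, busyServers_of_le hnc]
      have h := heqmid (n + 1) (by omega) (by omega)
      push_cast at h ⊢
      exact h
  have hδ : HasSum (fun j ↦ ul ^ j * -(if i = j then 1 else 0)) (-ul ^ i) := by
    refine (hasSum_ite_eq i (-ul ^ i)).congr_fun fun j ↦ ?_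
    by_cases h : i = j <;> simp [h, Ne.symm]
  have hweighted := (hasSum_pow_mul_forward hc lam hbsum hφsum hs).unique
    (((hasSum_nat_add_iff' 1).mpr hδ).congr_fun fun n ↦ by rw [hforward n])
  rw [Bi_eq_tsum_add_two c hbsum hs] at hulroot
  have hcorrection : ∑ k ∈ Icc 1 (c - 1), ul ^ (k - 1) * ((c : ℝ) - k) * b 0 * (1 - ul) * φ k =
      b 0 * (1 - ul) * (c * ∑' k, φ (k + 1) * ul ^ k -
        ∑' k, busyServers c (k + 1) * φ (k + 1) * ul ^ k) := by
    rw [mul_tsum_sub_tsum_busyServers c hφsum hs, mul_sum]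
    exact sum_congr rfl fun _ _ ↦ by ring
  rw [hcorrection]
  simp only [sum_range_one, pow_zero, one_mul] at hweighted
  linear_combination (∑' k, φ (k + 1) * ul ^ k) * hulroot - hweighted - heq0

theorem stmt10 (c : ℕ) (hc : 1 ≤ c) (b : ℕ → ℝ)
    (hbnn : ∀ j : ℕ, j ≠ 1 → 0 ≤ b j) (hb0 : 0 < b 0)
    (hbsum : Summable b) (hbzero : (∑' j : ℕ, b j) = 0)
    (hb2 : 0 < ∑' j : ℕ, b (j + 2))
    (lam : ℝ) (hlam : 0 < lam) (i : ℕ) (φ : ℕ → ℝ)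
    (hφnn : ∀ j : ℕ, 0 ≤ φ j) (hφsum : Summable φ)
    (heq0 : -lam * φ 0 + b 0 * φ 1 = -(if i = 0 then (1 : ℝ) else 0))
    (heqmid : ∀ j : ℕ, 1 ≤ j → j ≤ c - 1 →
      (∑ k ∈ Finset.Icc 1 (j - 1), b (j - k + 1) * φ k) +
        (b 1 - ((j : ℝ) - 1) * b 0 - lam) * φ j + ((j : ℝ) + 1) * b 0 * φ (j + 1) =
          -(if i = j then (1 : ℝ) else 0))
    (heqtail : ∀ j : ℕ, c ≤ j →
      (∑ k ∈ Finset.Icc 1 (j - 1), b (j - k + 1) * φ k) +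
        (b 1 - ((c : ℝ) - 1) * b 0 - lam) * φ j + (c : ℝ) * b 0 * φ (j + 1) =
          -(if i = j then (1 : ℝ) else 0))
    (ul : ℝ) (hul : ul ∈ Set.Ioo (0 : ℝ) 1) (hulroot : Bi b c ul = lam * ul) :
    lam * φ 0 +
        (∑ k ∈ Finset.Icc 1 (c - 1),
          ul ^ (k - 1) * ((c : ℝ) - (k : ℝ)) * b 0 * (1 - ul) * φ k) =
      ul ^ i :=
  stmt10_general c hc b hbsum lam i φ hφsum heq0 heqmid heqtail ul hul hulroot
end

section
/- The zeroth stationary probability satisfies β·(1 − π_0) = π_0·(h − H(u(β))) + ∑_{k=1}^{c−1} π_k (c−k) b_0 · u(β)^{k−1}·(1 − u(β)), where u(β) is the unique root of B_c(s) = β s in [0,1]; equivalently, β = π_0·[β + h − H(u(β)) + ∑_{k=1}^{c−1} (π_k/π_0)(c−k) b_0 u(β)^{k−1}(1 − u(β))] whenever π_0 > 0. -/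
/-!
Multiply the balance equation at level `n ≥ 1` by `u ^ n` and sum over `n`. For `|u| < 1` every
series converges absolutely, the convolution term becomes the Cauchy product of
`P(u) = ∑ π (n + 1) u ^ n` with `∑_{j ≥ 2} b_j u ^ j`, and writing `min n c = c - (c - n)⁺` splits
the server terms into a multiple of `P(u)` and a finite boundary sum. The result is
`π₀ H(u) + P(u) (B_c(u) - β u) = b₀ π₁ + b₀ (1 - u) ∑_{1 ≤ k < c} (c - k) π_k u^(k-1)`.
At the root `u = u(β)` the `P`-term vanishes, and the level-`0` equation
`β (1 - π₀) = h π₀ - b₀ π₁` turns this into the claimed identity.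
-/

open Set Filter Topology

/-- The generating function `H(s) = ∑_{j≥1} h_j s^j`. -/
noncomputable def Hgen (hh : ℕ → ℝ) (s : ℝ) : ℝ :=
  ∑' j : ℕ, hh (j + 1) * s ^ (j + 1)

theorem Summable.summable_norm_mul_pow {R : Type*} [NormedRing R] [NormOneClass R] {f : ℕ → R}
    (hf : Summable f) {u : R} (hu : ‖u‖ < 1) : Summable fun n ↦ ‖f n * u ^ n‖ := by
  refine summable_of_isBigO_nat (summable_geometric_of_lt_one (norm_nonneg u) hu)
    (Asymptotics.IsBigO.of_bound 1 ?_)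
  filter_upwards [hf.tendsto_atTop_zero.eventually (Metric.closedBall_mem_nhds 0 one_pos)]
    with n hn
  rw [dist_zero_right] at hn
  calc ‖‖f n * u ^ n‖‖ = ‖f n * u ^ n‖ := norm_norm _
    _ ≤ ‖f n‖ * ‖u‖ ^ n :=
      (norm_mul_le _ _).trans (mul_le_mul_of_nonneg_left (norm_pow_le _ _) (norm_nonneg _))
    _ ≤ 1 * ‖‖u‖ ^ n‖ := by
      rw [Real.norm_of_nonneg (by positivity)]
      gcongr

theorem Bi_eq_add_tsum {b : ℕ → ℝ} {u : ℝ} (hb : Summable fun j ↦ b j * u ^ j) (c : ℕ) :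
    Bi b c u = b 0 + b 1 * u + ∑' j, b (j + 2) * u ^ (j + 2) + ((c : ℝ) - 1) * b 0 * (1 - u) := by
  rw [Bi, ← hb.sum_add_tsum_nat_add 2]
  simp [Finset.sum_range_succ]

section Balance

variable {b hh π : ℕ → ℝ} {β u : ℝ}

/-- Left-hand side of the balance equation at level `n ≥ 1`, with `s` (resp. `s'`) the number of
busy servers at level `n` (resp. `n + 1`): `min n c` in the `M^X/M/c` queue. -/
def levelBalance (b hh π : ℕ → ℝ) (β s s' : ℝ) (n : ℕ) : ℝ :=
  hh n * π 0 + (∑ k ∈ Finset.Icc 1 (n - 1), b (n - k + 1) * π k) +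
    (b 1 - (s - 1) * b 0 - β) * π n + s' * b 0 * π (n + 1)

theorem levelBalance_min_eq_zero {c : ℕ}
    (hmid : ∀ n, 1 ≤ n → n ≤ c - 1 → levelBalance b hh π β n (n + 1) n = 0)
    (htail : ∀ n, c ≤ n → levelBalance b hh π β c c n = 0) {n : ℕ} (hn : 1 ≤ n) :
    levelBalance b hh π β (min n c : ℕ) (min (n + 1) c : ℕ) n = 0 := by
  rcases lt_or_ge n c with hlt | hge
  · rw [min_eq_left hlt.le, min_eq_left hlt]
    exact_mod_cast hmid n hn (by omega)
  · rw [min_eq_right hge, min_eq_right (by omega)]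
    exact htail n hge

theorem hasSum_convolution (hπ : Summable fun i ↦ ‖π (i + 1) * u ^ i‖)
    (hb : Summable fun j ↦ ‖b (j + 2) * u ^ (j + 2)‖) :
    HasSum (fun m ↦ (∑ k ∈ Finset.Icc 1 m, b (m + 1 - k + 1) * π k) * u ^ (m + 1))
      ((∑' i, π (i + 1) * u ^ i) * ∑' j, b (j + 2) * u ^ (j + 2)) := by
  rw [← hasSum_nat_add_iff' 1, Finset.sum_range_one, Finset.Icc_eq_empty (by simp),
    Finset.sum_empty, zero_mul, sub_zero]
  refine (hasSum_sum_range_mul_of_summable_norm hπ hb).congr_fun fun n ↦ ?_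
  rw [← Finset.Ico_add_one_right_eq_Icc, Finset.sum_Ico_eq_sum_range, Finset.sum_mul]
  refine Finset.sum_congr (by simp) fun i hi ↦ ?_
  have hi : i ≤ n := Nat.lt_succ_iff.mp (by simpa using hi)
  rw [show n + 1 + 1 - (1 + i) + 1 = n - i + 2 by omega, add_comm 1 i,
    show n + 1 + 1 = i + (n - i + 2) by omega, pow_add]
  ring

theorem hasSum_min_mul {c : ℕ} (hπ : Summable fun i ↦ π (i + 1) * u ^ i) :
    HasSum (fun m ↦ ((min (m + 1) c : ℕ) : ℝ) * (π (m + 1) * u ^ m))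
      ((c : ℝ) * ∑' i, π (i + 1) * u ^ i -
        ∑ k ∈ Finset.Icc 1 (c - 1), π k * ((c : ℝ) - k) * u ^ (k - 1)) := by
  have hidle : HasSum (fun m ↦ ((c - (m + 1) : ℕ) : ℝ) * (π (m + 1) * u ^ m))
      (∑ k ∈ Finset.Icc 1 (c - 1), π k * ((c : ℝ) - k) * u ^ (k - 1)) := by
    have hreindex : ∑ k ∈ Finset.Icc 1 (c - 1), π k * ((c : ℝ) - k) * u ^ (k - 1) =
        ∑ m ∈ Finset.range (c - 1), ((c - (m + 1) : ℕ) : ℝ) * (π (m + 1) * u ^ m) := by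
      have hIcc : Finset.Icc 1 (c - 1) = Finset.Ico 1 c := by
        ext; simp only [Finset.mem_Icc, Finset.mem_Ico]; omega
      rw [hIcc, Finset.sum_Ico_eq_sum_range]
      refine Finset.sum_congr rfl fun m hm ↦ ?_
      rw [Finset.mem_range] at hm
      rw [Nat.cast_sub (by omega), add_comm 1 m, Nat.add_sub_cancel]
      push_cast
      ring
    rw [hreindex]
    refine hasSum_sum_of_ne_finset_zero fun m hm ↦ ?_
    rw [Finset.mem_range] at hm
    rw [Nat.sub_eq_zero_of_le (by omega), Nat.cast_zero, zero_mul]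
  refine ((hπ.hasSum.mul_left (c : ℝ)).sub hidle).congr_fun fun m ↦ ?_
  have hsplit : ((min (m + 1) c : ℕ) : ℝ) + ((c - (m + 1) : ℕ) : ℝ) = c := by
    exact_mod_cast (by omega : min (m + 1) c + (c - (m + 1)) = c)
  linear_combination (π (m + 1) * u ^ m) * hsplit

theorem generating_function_identity {c : ℕ} (hc : 1 ≤ c) (hb : Summable b)
    (hh₁ : Summable fun j ↦ hh (j + 1)) (hπ : Summable π) (hu : |u| < 1)
    (hbal : ∀ n, 1 ≤ n → levelBalance b hh π β (min n c : ℕ) (min (n + 1) c : ℕ) n = 0) :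
    π 0 * Hgen hh u + (∑' i, π (i + 1) * u ^ i) * (Bi b c u - β * u) =
      b 0 * π 1 + b 0 * (1 - u) *
        ∑ k ∈ Finset.Icc 1 (c - 1), π k * ((c : ℝ) - k) * u ^ (k - 1) := by
  have hu' : ‖u‖ < 1 := by rwa [Real.norm_eq_abs]
  have hbu := hb.summable_norm_mul_pow hu'
  have hhu := ((summable_nat_add_iff (f := hh) 1).1 hh₁).summable_norm_mul_pow hu'
  have hπu := ((summable_nat_add_iff (f := π) 1).2 hπ).summable_norm_mul_pow hu'
  have hS := hasSum_min_mul (c := c) hπu.of_norm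
  have hA : HasSum (fun m ↦ π 0 * (hh (m + 1) * u ^ (m + 1))) (π 0 * Hgen hh u) :=
    ((summable_nat_add_iff 1).2 hhu).of_norm.hasSum.mul_left _
  have hB := hasSum_convolution hπu ((summable_nat_add_iff 2).2 hbu)
  have hC := hπu.of_norm.hasSum.mul_left ((b 1 + b 0 - β) * u)
  have hD := hS.mul_left (b 0 * u)
  have hE := ((hasSum_nat_add_iff' 1).2 hS).mul_left (b 0)
  -- `hA`, ..., `hE` are the five parts of `∑ u ^ (m + 1) * (balance at level m + 1)`.
  have hzero := ((((hA.add hB).add hC).sub hD).add hE).unique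
    (hasSum_zero.congr_fun fun m ↦ ?_)
  · rw [Bi_eq_add_tsum hbu.of_norm]
    simp only [Finset.sum_range_one, zero_add, min_eq_left hc, Nat.cast_one, pow_zero, one_mul,
      mul_one] at hzero
    linear_combination hzero
  · have hm := hbal (m + 1) (by omega)
    simp only [levelBalance, Nat.add_sub_cancel] at hm
    linear_combination u ^ (m + 1) * hm

end Balance

theorem stmt16_general (c : ℕ) (hc : 1 ≤ c) (b : ℕ → ℝ)
    (hbsum : Summable b)
    (hh : ℕ → ℝ)
    (hhsum : Summable (fun j : ℕ => hh (j + 1)))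
    (β : ℝ)
    (π : ℕ → ℝ) (hπsum : Summable π)
    (heq0 : -((∑' j : ℕ, hh (j + 1)) + β) * π 0 + b 0 * π 1 + β = 0)
    (heqmid : ∀ n : ℕ, 1 ≤ n → n ≤ c - 1 →
      hh n * π 0 + (∑ k ∈ Finset.Icc 1 (n - 1), b (n - k + 1) * π k) +
        (b 1 - ((n : ℝ) - 1) * b 0 - β) * π n + ((n : ℝ) + 1) * b 0 * π (n + 1) = 0)
    (heqtail : ∀ n : ℕ, c ≤ n →
      hh n * π 0 + (∑ k ∈ Finset.Icc 1 (n - 1), b (n - k + 1) * π k) +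
        (b 1 - ((c : ℝ) - 1) * b 0 - β) * π n + (c : ℝ) * b 0 * π (n + 1) = 0)
    (uβ : ℝ) (huβ : uβ ∈ Set.Ioo (0 : ℝ) 1) (huβroot : Bi b c uβ = β * uβ) :
    β * (1 - π 0) =
        π 0 * ((∑' j : ℕ, hh (j + 1)) - Hgen hh uβ) +
          (∑ k ∈ Finset.Icc 1 (c - 1),
            π k * ((c : ℝ) - (k : ℝ)) * b 0 * uβ ^ (k - 1) * (1 - uβ)) ∧
      (0 < π 0 →
        β = π 0 * (β + (∑' j : ℕ, hh (j + 1)) - Hgen hh uβ +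
            ∑ k ∈ Finset.Icc 1 (c - 1),
              (π k / π 0) * ((c : ℝ) - (k : ℝ)) * b 0 * uβ ^ (k - 1) * (1 - uβ))) := by
  have hu : |uβ| < 1 := abs_lt.2 ⟨by linarith [huβ.1], huβ.2⟩
  have hgen := generating_function_identity hc hbsum hhsum hπsum hu
    fun n hn ↦ levelBalance_min_eq_zero heqmid heqtail hn
  rw [huβroot, sub_self, mul_zero, add_zero] at hgen
  have hboundary : ∑ k ∈ Finset.Icc 1 (c - 1),
      π k * ((c : ℝ) - k) * b 0 * uβ ^ (k - 1) * (1 - uβ) =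
      b 0 * (1 - uβ) * ∑ k ∈ Finset.Icc 1 (c - 1), π k * ((c : ℝ) - k) * uβ ^ (k - 1) := by
    rw [Finset.mul_sum]
    exact Finset.sum_congr rfl fun k _ ↦ by ring
  have hfirst : β * (1 - π 0) = π 0 * ((∑' j : ℕ, hh (j + 1)) - Hgen hh uβ) +
      ∑ k ∈ Finset.Icc 1 (c - 1), π k * ((c : ℝ) - k) * b 0 * uβ ^ (k - 1) * (1 - uβ) := by
    rw [hboundary]
    linear_combination heq0 + hgen
  refine ⟨hfirst, fun hπ0 ↦ ?_⟩
  have hscaled : π 0 * ∑ k ∈ Finset.Icc 1 (c - 1),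
      π k / π 0 * ((c : ℝ) - k) * b 0 * uβ ^ (k - 1) * (1 - uβ) =
      ∑ k ∈ Finset.Icc 1 (c - 1), π k * ((c : ℝ) - k) * b 0 * uβ ^ (k - 1) * (1 - uβ) := by
    rw [Finset.mul_sum]
    exact Finset.sum_congr rfl fun k _ ↦ by field_simp
  linear_combination hfirst - hscaled

theorem stmt16 (c : ℕ) (hc : 1 ≤ c) (b : ℕ → ℝ)
    (hbnn : ∀ j : ℕ, j ≠ 1 → 0 ≤ b j) (hb0 : 0 < b 0)
    (hbsum : Summable b) (hbzero : (∑' j : ℕ, b j) = 0)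
    (hb2 : 0 < ∑' j : ℕ, b (j + 2))
    (hh : ℕ → ℝ) (hhnn : ∀ j : ℕ, 0 ≤ hh (j + 1))
    (hhsum : Summable (fun j : ℕ => hh (j + 1)))
    (hhpos : 0 < ∑' j : ℕ, hh (j + 1))
    (β : ℝ) (hβ : 0 < β)
    (π : ℕ → ℝ) (hπnn : ∀ n : ℕ, 0 ≤ π n) (hπsum : Summable π)
    (hπ1 : (∑' n : ℕ, π n) = 1)
    (heq0 : -((∑' j : ℕ, hh (j + 1)) + β) * π 0 + b 0 * π 1 + β = 0)
    (heqmid : ∀ n : ℕ, 1 ≤ n → n ≤ c - 1 →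
      hh n * π 0 + (∑ k ∈ Finset.Icc 1 (n - 1), b (n - k + 1) * π k) +
        (b 1 - ((n : ℝ) - 1) * b 0 - β) * π n + ((n : ℝ) + 1) * b 0 * π (n + 1) = 0)
    (heqtail : ∀ n : ℕ, c ≤ n →
      hh n * π 0 + (∑ k ∈ Finset.Icc 1 (n - 1), b (n - k + 1) * π k) +
        (b 1 - ((c : ℝ) - 1) * b 0 - β) * π n + (c : ℝ) * b 0 * π (n + 1) = 0)
    (uβ : ℝ) (huβ : uβ ∈ Set.Ioo (0 : ℝ) 1) (huβroot : Bi b c uβ = β * uβ) :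
    β * (1 - π 0) =
        π 0 * ((∑' j : ℕ, hh (j + 1)) - Hgen hh uβ) +
          (∑ k ∈ Finset.Icc 1 (c - 1),
            π k * ((c : ℝ) - (k : ℝ)) * b 0 * uβ ^ (k - 1) * (1 - uβ)) ∧
      (0 < π 0 →
        β = π 0 * (β + (∑' j : ℕ, hh (j + 1)) - Hgen hh uβ +
            ∑ k ∈ Finset.Icc 1 (c - 1),
              (π k / π 0) * ((c : ℝ) - (k : ℝ)) * b 0 * uβ ^ (k - 1) * (1 - uβ))) :=
  stmt16_general c hc b hbsum hh hhsum β π hπsum heq0 heqmid heqtail uβ huβ huβroot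
end
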